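/- arXiv:1503.06018 — 9 statements merged into one kernel-verified Lean document; each statement's English description precedes it below -/
import Mathlib

section
/- Let G be a graph, M an induced matching of G of maximum size, and let F(M) = N_G(V(M)) \ V(M). Then the set S(M) = N_G(F(M)) \ (F(M) ∪ V(M)) is an independent set of G. -/
/-- If `M` is a maximum induced matching of `G`, `F(M) = N_G(V(M)) \ V(M)` and
`S(M) = N_G(F(M)) \ (F(M) ∪ V(M))`, then `S(M)` is an independent set of `G`.
Here the matching is given as a subgraph `M` all of whose vertices are matched
(`M.IsMatching`), inducedness says every `G`-edge between vertices of `M` is an edge of `M`,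
and maximality compares the number of edges. -/
theorem stmt_2 {V : Type*} (G : SimpleGraph V) (M : G.Subgraph)
    (hmatch : M.IsMatching)
    (hind : ∀ ⦃a b : V⦄, a ∈ M.verts → b ∈ M.verts → G.Adj a b → M.Adj a b)
    (hmax : ∀ M' : G.Subgraph, M'.IsMatching →
      (∀ ⦃a b : V⦄, a ∈ M'.verts → b ∈ M'.verts → G.Adj a b → M'.Adj a b) →
      M'.edgeSet.ncard ≤ M.edgeSet.ncard) :
    ((⋃ v ∈ ((⋃ w ∈ M.verts, G.neighborSet w) \ M.verts), G.neighborSet v) \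
        (((⋃ w ∈ M.verts, G.neighborSet w) \ M.verts) ∪ M.verts)).Pairwise
      (fun a b => ¬ G.Adj a b) := by
  intro a ha b hb hne hadj
  -- extract facts about a and b
  obtain ⟨-, ha2⟩ := ha
  obtain ⟨-, hb2⟩ := hb
  rw [Set.mem_union] at ha2 hb2
  push_neg at ha2 hb2
  obtain ⟨ha3, haV⟩ := ha2
  obtain ⟨hb3, hbV⟩ := hb2
  have haN : ∀ w ∈ M.verts, ¬ G.Adj w a := by
    intro w hw hwa
    exact ha3 ⟨Set.mem_biUnion hw hwa, haV⟩
  have hbN : ∀ w ∈ M.verts, ¬ G.Adj w b := by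
    intro w hw hwb
    exact hb3 ⟨Set.mem_biUnion hw hwb, hbV⟩
  -- the single-edge induced matching
  set E : G.Subgraph := G.subgraphOfAdj hadj with hE
  have hEm : E.IsMatching := SimpleGraph.Subgraph.IsMatching.subgraphOfAdj hadj
  have hEind : ∀ ⦃x y : V⦄, x ∈ E.verts → y ∈ E.verts → G.Adj x y → E.Adj x y := by
    intro x y hx hy hxy
    simp only [hE, SimpleGraph.subgraphOfAdj_verts, Set.mem_insert_iff,
      Set.mem_singleton_iff] at hx hy
    simp only [hE, SimpleGraph.subgraphOfAdj_adj]
    rcases hx with rfl | rfl <;> rcases hy with rfl | rfl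
    · exact absurd rfl hxy.ne
    · rfl
    · exact Sym2.eq_swap
    · exact absurd rfl hxy.ne
  have hEcard : E.edgeSet.ncard = 1 := by
    rw [hE, SimpleGraph.edgeSet_subgraphOfAdj]
    simp
  by_cases hfin : M.edgeSet.Finite
  · -- M ⊔ E is a bigger induced matching
    have hdisj : Disjoint M.support E.support := by
      rw [hmatch.support_eq_verts, hEm.support_eq_verts, hE,
        SimpleGraph.subgraphOfAdj_verts, Set.disjoint_right]
      rintro x (rfl | rfl) <;> assumption
    have hMEm : (M ⊔ E).IsMatching := hmatch.sup hEm hdisj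
    have hMEind : ∀ ⦃x y : V⦄, x ∈ (M ⊔ E).verts → y ∈ (M ⊔ E).verts →
        G.Adj x y → (M ⊔ E).Adj x y := by
      intro x y hx hy hxy
      rcases hx with hx | hx <;> rcases hy with hy | hy
      · exact Or.inl (hind hx hy hxy)
      · exfalso
        rcases hy with rfl | rfl
        · exact haN x hx hxy
        · exact hbN x hx hxy
      · exfalso
        rcases hx with rfl | rfl
        · exact haN y hy hxy.symm
        · exact hbN y hy hxy.symm
      · exact Or.inr (hEind hx hy hxy)
    have hle := hmax (M ⊔ E) hMEm hMEind
    have hedge : (M ⊔ E).edgeSet = M.edgeSet ∪ E.edgeSet := by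
      ext e
      refine e.ind fun x y => ?_
      simp [SimpleGraph.Subgraph.mem_edgeSet]
    have hnot : s(a, b) ∉ M.edgeSet := by
      intro h
      exact haV (M.edge_vert h)
    rw [hedge, hE, SimpleGraph.edgeSet_subgraphOfAdj] at hle
    rw [Set.union_singleton, Set.ncard_insert_of_notMem hnot hfin] at hle
    omega
  · -- then M has edgeSet.ncard = 0, but E is an induced matching with 1 edge
    have := hmax E hEm hEind
    rw [hEcard, Set.Infinite.ncard (by exact hfin)] at this
    omega
end

section
/- Let G be a 2K₂-free bipartite graph. Then the complement of G is a chordal graph (i.e., G is cochordal). -/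
/-- A simple graph is `2K₂`-free if it has no induced subgraph isomorphic to two
disjoint edges. -/
def TwoK2Free {V : Type*} (G : SimpleGraph V) : Prop :=
  ¬ ∃ a b c d : V, G.Adj a b ∧ G.Adj c d ∧
      a ≠ c ∧ a ≠ d ∧ b ≠ c ∧ b ≠ d ∧
      ¬ G.Adj a c ∧ ¬ G.Adj a d ∧ ¬ G.Adj b c ∧ ¬ G.Adj b d

/-- `G` contains an induced cycle on `n` vertices. -/
def HasInducedCycle {V : Type*} (G : SimpleGraph V) (n : ℕ) : Prop :=
  ∃ f : ZMod n → V, Function.Injective f ∧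
    ∀ i j : ZMod n, G.Adj (f i) (f j) ↔ (j = i + 1 ∨ i = j + 1)

/-- A graph is chordal if it contains no induced cycle of length at least `4`. -/
def Chordal {V : Type*} (G : SimpleGraph V) : Prop :=
  ∀ n : ℕ, 4 ≤ n → ¬ HasInducedCycle G n

/-- A `2K₂`-free bipartite graph is cochordal: its complement is chordal. -/
theorem stmt_4 {V : Type*} (G : SimpleGraph V) (h2 : TwoK2Free G)
    (A B : Set V) (hU : A ∪ B = Set.univ) (hd : Disjoint A B)
    (hA : ∀ a ∈ A, ∀ a' ∈ A, ¬ G.Adj a a') (hB : ∀ b ∈ B, ∀ b' ∈ B, ¬ G.Adj b b') :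
    Chordal Gᶜ := by
  intro n hn ⟨f, hinj, hadj⟩
  -- non-adjacent (and distinct) on the cycle means adjacent in G
  have hG : ∀ i j : ZMod n, i ≠ j → j ≠ i + 1 → i ≠ j + 1 → G.Adj (f i) (f j) := by
    intro i j hij h1 h2
    by_contra hcon
    have : Gᶜ.Adj (f i) (f j) :=
      (SimpleGraph.compl_adj G (f i) (f j)).mpr ⟨fun h => hij (hinj h), hcon⟩
    rw [hadj] at this
    tauto
  have hnG : ∀ i j : ZMod n, (j = i + 1 ∨ i = j + 1) → ¬ G.Adj (f i) (f j) := by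
    intro i j h
    have := (hadj i j).mpr h
    exact ((SimpleGraph.compl_adj G (f i) (f j)).mp this).2
  rcases Nat.lt_or_ge n 5 with h5 | h5
  · -- n = 4
    have hn4 : n = 4 := by omega
    subst hn4
    have hne : ∀ i j : ZMod 4, i ≠ j → f i ≠ f j := fun i j h hh => h (hinj hh)
    exact h2 ⟨f 0, f 2, f 1, f 3,
      hG 0 2 (by decide) (by decide) (by decide),
      hG 1 3 (by decide) (by decide) (by decide),
      hne 0 1 (by decide), hne 0 3 (by decide),
      hne 2 1 (by decide), hne 2 3 (by decide),
      hnG 0 1 (Or.inl (by decide)), hnG 0 3 (Or.inr (by decide)),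
      hnG 2 1 (Or.inr (by decide)), hnG 2 3 (Or.inl (by decide))⟩
  · -- n ≥ 5
    have castne : ∀ x y : ℕ, x ≤ 5 → y ≤ 5 → x % 5 ≠ y % 5 →
        ((x : ZMod n) : ZMod n) ≠ (y : ZMod n) := by
      intro x y hx hy h5' h
      rw [ZMod.natCast_eq_natCast_iff, Nat.ModEq] at h
      rcases Nat.lt_or_ge n 6 with h6 | h6
      · have hn5 : n = 5 := by omega
        subst hn5
        exact h5' h
      · rw [Nat.mod_eq_of_lt (by omega), Nat.mod_eq_of_lt (by omega)] at h
        exact h5' (by omega)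
    have hGnat : ∀ a b : ℕ, a ≤ 4 → b ≤ 4 → a % 5 ≠ b % 5 →
        a % 5 ≠ (b + 1) % 5 → (a + 1) % 5 ≠ b % 5 →
        G.Adj (f (a : ZMod n)) (f (b : ZMod n)) := by
      intro a b ha hb h1 h2 h3
      have e1 : ((a + 1 : ℕ) : ZMod n) = (a : ZMod n) + 1 := by push_cast; ring
      have e2 : ((b + 1 : ℕ) : ZMod n) = (b : ZMod n) + 1 := by push_cast; ring
      apply hG
      · exact castne a b (by omega) (by omega) h1
      · rw [← e1]
        exact castne b (a + 1) (by omega) (by omega) (fun h => h3 h.symm)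
      · rw [← e2]
        exact castne a (b + 1) (by omega) (by omega) h2
    have side : ∀ u v : V, G.Adj u v → (u ∈ A ↔ v ∉ A) := by
      intro u v huv
      have hu : u ∈ A ∪ B := hU ▸ Set.mem_univ u
      have hv : v ∈ A ∪ B := hU ▸ Set.mem_univ v
      constructor
      · intro hua hva
        exact hA u hua v hva huv
      · intro hva
        rcases hu with h | h
        · exact h
        · rcases hv with h' | h'
          · exact absurd h' hva
          · exact absurd huv (hB u h v h')
    have s02 := side _ _ (hGnat 0 2 (by omega) (by omega) (by decide) (by decide) (by decide))
    have s24 := side _ _ (hGnat 2 4 (by omega) (by omega) (by decide) (by decide) (by decide))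
    have s03 := side _ _ (hGnat 0 3 (by omega) (by omega) (by decide) (by decide) (by decide))
    have s13 := side _ _ (hGnat 1 3 (by omega) (by omega) (by decide) (by decide) (by decide))
    have s14 := side _ _ (hGnat 1 4 (by omega) (by omega) (by decide) (by decide) (by decide))
    tauto
end

section
/- Let G be a 2K₂-free bipartite graph with bipartition classes A and B, each nonempty, and suppose G has at least one edge and no isolated vertices. Then A contains a vertex adjacent to all vertices of B, and B contains a vertex adjacent to all vertices of A. -/
open Classical in
lemma twoK2Free_dominating {V : Type*} [Fintype V] (G : SimpleGraph V) (h2 : TwoK2Free G)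
    (A B : Set V) (hU : A ∪ B = Set.univ) (hd : Disjoint A B)
    (hAne : A.Nonempty)
    (hA : ∀ a ∈ A, ∀ a' ∈ A, ¬ G.Adj a a') (hB : ∀ b ∈ B, ∀ b' ∈ B, ¬ G.Adj b b')
    (hiso : ∀ v : V, ∃ w : V, G.Adj v w) :
    ∃ a ∈ A, ∀ b ∈ B, G.Adj a b := by
  classical
  set f : V → Finset V := fun v => {w | G.Adj v w}.toFinset with hf
  have hsne : A.toFinset.Nonempty := Set.toFinset_nonempty.2 hAne
  obtain ⟨a, haA, hamax⟩ := A.toFinset.exists_max_image (fun v => (f v).card) hsne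
  rw [Set.mem_toFinset] at haA
  refine ⟨a, haA, fun b hb => ?_⟩
  by_contra hab
  have haneb : ∀ x ∈ A, ∀ y ∈ B, x ≠ y := fun x hx y hy h =>
    (Set.disjoint_left.mp hd hx) (h ▸ hy)
  obtain ⟨a', ha'⟩ := hiso b
  have ha'A : a' ∈ A := by
    have : a' ∈ A ∪ B := hU ▸ Set.mem_univ a'
    rcases this with h | h
    · exact h
    · exact absurd ha' (hB b hb a' h)
  have ha'b : G.Adj a' b := ha'.symm
  have : ∃ b', G.Adj a b' ∧ ¬ G.Adj a' b' := by
    by_contra h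
    push_neg at h
    have hsub : f a ⊆ f a' := fun w hw => by
      simp only [hf, Set.mem_toFinset, Set.mem_setOf_eq] at hw ⊢
      exact h w hw
    have hssub : f a ⊂ f a' := by
      refine ⟨hsub, fun hc => ?_⟩
      have : b ∈ f a' := by simp [hf, ha'b]
      exact hab (by simpa [hf] using hc this)
    have := Finset.card_lt_card hssub
    have := hamax a' (Set.mem_toFinset.2 ha'A)
    omega
  obtain ⟨b', hab', ha'b'⟩ := this
  have hb'B : b' ∈ B := by
    have : b' ∈ A ∪ B := hU ▸ Set.mem_univ b'
    rcases this with h | h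
    · exact absurd hab' (hA a haA b' h)
    · exact h
  exact h2 ⟨a, b', a', b, hab', ha'b,
    fun h => hab (h ▸ ha'b), haneb a haA b hb,
    (haneb a' ha'A b' hb'B).symm, fun h => hab (h ▸ hab'),
    hA a haA a' ha'A, hab, fun h => ha'b' h.symm, hB b' hb'B b hb⟩

/-- In a `2K₂`-free bipartite graph with nonempty bipartition classes `A`, `B`, at least
one edge and no isolated vertices, each color class contains a vertex adjacent to all
vertices of the other class. -/
theorem stmt_5 {V : Type*} [Fintype V] (G : SimpleGraph V) (h2 : TwoK2Free G)
    (A B : Set V) (hU : A ∪ B = Set.univ) (hd : Disjoint A B)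
    (hAne : A.Nonempty) (hBne : B.Nonempty)
    (hA : ∀ a ∈ A, ∀ a' ∈ A, ¬ G.Adj a a') (hB : ∀ b ∈ B, ∀ b' ∈ B, ¬ G.Adj b b')
    (hedge : G.edgeSet.Nonempty) (hiso : ∀ v : V, ∃ w : V, G.Adj v w) :
    (∃ a ∈ A, ∀ b ∈ B, G.Adj a b) ∧ (∃ b ∈ B, ∀ a ∈ A, G.Adj b a) := by
  exact ⟨twoK2Free_dominating G h2 A B hU hd hAne hA hB hiso,
    twoK2Free_dominating G h2 B A (Set.union_comm A B ▸ hU) hd.symm hBne hB hA hiso⟩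
end

section
/- Let G be a simple graph and x a vertex of G. For any partition N_G(x) = Y ∪ Z into disjoint sets, the Lozin transform L_x(G;Y,Z) satisfies im(L_x(G;Y,Z)) = im(G) + 1, where im denotes the induced matching number. -/
noncomputable def inducedMatchingNumber {V : Type*} (G : SimpleGraph V) : ℕ :=
  sSup {n : ℕ | ∃ M : G.Subgraph, M.IsMatching ∧
    (∀ ⦃a b : V⦄, a ∈ M.verts → b ∈ M.verts → G.Adj a b → M.Adj a b) ∧
    M.edgeSet.ncard = n}

/-- The Lozin transform `L_x(G; Y, Z)`: delete `x`, add a path `y–a–b–z` on four new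
vertices (`inr 0 = y`, `inr 1 = a`, `inr 2 = b`, `inr 3 = z`), join `y` to all of `Y`
and `z` to all of `Z`. -/
def lozin {V : Type*} (G : SimpleGraph V) (x : V) (Y Z : Set V) :
    SimpleGraph ({v : V // v ≠ x} ⊕ Fin 4) :=
  SimpleGraph.fromRel fun p q =>
    match p, q with
    | Sum.inl u, Sum.inl v => G.Adj u.1 v.1
    | Sum.inl u, Sum.inr i => (i = 0 ∧ u.1 ∈ Y) ∨ (i = 3 ∧ u.1 ∈ Z)
    | Sum.inr i, Sum.inr j => (i = 0 ∧ j = 1) ∨ (i = 1 ∧ j = 2) ∨ (i = 2 ∧ j = 3)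
    | _, _ => False

/-!
For the lower bound, transfer a maximum induced matching of `G` to the transform, sending `x` to
`y` or to `z` according to the side of `N(x) = Y ∪ Z` on which its partner lies, and add the path
edge at the other end (`a–b` if `x` is unmatched). For the upper bound, the edges of an induced
matching of the transform that avoid the path form an induced matching of `G`. If `z`, say, is
unmatched, every other edge contains one of the adjacent vertices `y`, `a`, so there is at most
one. If `y` and `z` are both matched, every other edge contains one of them, and since `a` and `b`
are adjacent, one of them is matched to an old vertex `u`; then the edges avoiding the path
together with `x–u` form an induced matching of `G`.
-/

open Function Sum

namespace Set

variable {α β : Type*} {s : Set α} {f : α → β}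

lemma InjOn.sym2_map (hf : s.InjOn f) : s.sym2.InjOn (Sym2.map f) := by
  rintro ⟨a, b⟩ hab ⟨c, d⟩ hcd h
  simp only [mk_mem_sym2_iff, Sym2.map_mk, Sym2.eq_iff] at hab hcd h ⊢
  rcases h with ⟨hac, hbd⟩ | ⟨had, hbc⟩
  · exact Or.inl ⟨hf hab.1 hcd.1 hac, hf hab.2 hcd.2 hbd⟩
  · exact Or.inr ⟨hf hab.1 hcd.2 had, hf hab.2 hcd.1 hbc⟩

end Set

lemma Sum.exists_inr_mem_of_notMem_sym2_range_inl {α β : Type*} {e : Sym2 (α ⊕ β)}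
    (he : e ∉ (Set.range inl).sym2) : ∃ j, inr j ∈ e := by
  obtain ⟨p, hp, hpl⟩ := Set.not_subset.1 (Set.mem_sym2_iff_subset.not.1 he)
  cases p with
  | inl u => exact absurd (Set.mem_range_self u) hpl
  | inr j => exact ⟨j, hp⟩

namespace SimpleGraph

variable {V W : Type*} {G : SimpleGraph V} {H : SimpleGraph W} {S T : Set (Sym2 V)}
  {e e' : Sym2 V}

def Far (G : SimpleGraph V) (e e' : Sym2 V) : Prop :=
  ∀ a ∈ e, ∀ b ∈ e', a ≠ b ∧ ¬G.Adj a b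

lemma Far.symm (h : G.Far e e') : G.Far e' e := fun a ha b hb =>
  ⟨(h b hb a ha).1.symm, fun hab => (h b hb a ha).2 hab.symm⟩

lemma not_far_self (e : Sym2 V) : ¬G.Far e e := by
  induction e using Sym2.ind with
  | _ a b => exact fun h => (h a (Sym2.mem_mk_left a b) a (Sym2.mem_mk_left a b)).1 rfl

def IsInducedMatching (G : SimpleGraph V) (S : Set (Sym2 V)) : Prop :=
  S ⊆ G.edgeSet ∧ S.Pairwise G.Far

lemma IsInducedMatching.mono (hS : G.IsInducedMatching S) (hTS : T ⊆ S) :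
    G.IsInducedMatching T :=
  ⟨hTS.trans hS.1, hS.2.mono hTS⟩

lemma IsInducedMatching.eq_of_mem_of_mem {a b : V} (hS : G.IsInducedMatching S) (he : e ∈ S)
    (he' : e' ∈ S) (ha : a ∈ e) (hb : b ∈ e') (hab : a = b ∨ G.Adj a b) : e = e' := by
  by_contra hne
  have := hS.2 he he' hne a ha b hb
  tauto

lemma IsInducedMatching.eq_right_of_adj {v w c : V} (hS : G.IsInducedMatching S)
    (hvw : s(v, w) ∈ S) (he : e ∈ S) (hc : c ∈ e) (hvc : G.Adj v c) : c = w := by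
  rw [← hS.eq_of_mem_of_mem hvw he (Sym2.mem_mk_left v w) hc (Or.inr hvc)] at hc
  exact (Sym2.mem_iff.1 hc).resolve_left hvc.ne'

lemma IsInducedMatching.ncard_le_of_forall_exists_mem (hS : G.IsInducedMatching S)
    (hTS : T ⊆ S) {Q : Set V} (hQ : Q.Finite) (hT : ∀ e ∈ T, ∃ q ∈ Q, q ∈ e) :
    T.ncard ≤ Q.ncard := by
  rcases T.eq_empty_or_nonempty with rfl | ⟨e₀, he₀⟩
  · simp
  have : Nonempty V := ⟨(hT e₀ he₀).choose⟩
  choose! q hqQ hqe using hT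
  refine Set.ncard_le_ncard_of_injOn q hqQ (fun e he e' he' h => ?_) hQ
  exact hS.eq_of_mem_of_mem (hTS he) (hTS he') (hqe e he) (h ▸ hqe e' he') (Or.inl rfl)

lemma isInducedMatching_edgeSet {M : G.Subgraph} (hM : M.IsMatching) (hI : M.IsInduced) :
    G.IsInducedMatching M.edgeSet := by
  refine ⟨M.edgeSet_subset, fun e he e' he' hne a ha b hb => ?_⟩
  obtain ⟨a', rfl⟩ := Sym2.mem_iff_exists.1 ha
  obtain ⟨b', rfl⟩ := Sym2.mem_iff_exists.1 hb
  rw [Subgraph.mem_edgeSet] at he he'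
  refine ⟨?_, fun hab => ?_⟩
  · rintro rfl
    exact hne (by rw [hM.eq_of_adj_left he he'])
  · have hMab := hI (M.edge_vert he) (M.edge_vert he') hab
    rw [← hM.eq_of_adj_left he hMab, ← hM.eq_of_adj_left he' hMab.symm] at hne
    exact hne Sym2.eq_swap

lemma IsInducedMatching.exists_subgraph (hS : G.IsInducedMatching S) :
    ∃ M : G.Subgraph, M.IsMatching ∧ M.IsInduced ∧ M.edgeSet = S := by
  let M : G.Subgraph :=
    { verts := {v | ∃ e ∈ S, v ∈ e}
      Adj := fun a b => s(a, b) ∈ S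
      adj_sub := fun h => hS.1 h
      edge_vert := fun h => ⟨_, h, Sym2.mem_mk_left _ _⟩
      symm := ⟨fun _ _ h => by rwa [Sym2.eq_swap]⟩ }
  refine ⟨M, ?_, ?_, ?_⟩
  · rintro v ⟨e, he, hv⟩
    obtain ⟨w, rfl⟩ := Sym2.mem_iff_exists.1 hv
    refine ⟨w, he, fun w' hw' => ?_⟩
    by_contra hne
    have hne' : s(v, w') ≠ s(v, w) := fun h => hne (Sym2.congr_right.1 h)
    exact (hS.2 hw' he hne' v (Sym2.mem_mk_left _ _) v (Sym2.mem_mk_left _ _)).1 rfl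
  · rintro a ⟨e, he, ha⟩ b ⟨e', he', hb⟩ hab
    obtain rfl | hne := eq_or_ne e e'
    · show s(a, b) ∈ S
      rwa [← (Sym2.mem_and_mem_iff hab.ne).1 ⟨ha, hb⟩]
    · exact ((hS.2 he he' hne a ha b hb).2 hab).elim
  · ext e
    induction e using Sym2.ind with
    | _ a b => exact Subgraph.mem_edgeSet

lemma inducedMatchingNumber_eq_sSup (G : SimpleGraph V) :
    inducedMatchingNumber G = sSup {n | ∃ S, G.IsInducedMatching S ∧ S.ncard = n} := by
  rw [inducedMatchingNumber]
  congr 1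
  ext n
  constructor
  · rintro ⟨M, hM, hI, rfl⟩
    exact ⟨M.edgeSet, isInducedMatching_edgeSet hM fun _ ha _ hb => hI ha hb, rfl⟩
  · rintro ⟨S, hS, rfl⟩
    obtain ⟨M, hM, hI, rfl⟩ := hS.exists_subgraph
    exact ⟨M, hM, fun _ _ ha hb => hI ha hb, rfl⟩

lemma bddAbove_ncard_isInducedMatching [Finite V] (G : SimpleGraph V) :
    BddAbove {n | ∃ S, G.IsInducedMatching S ∧ S.ncard = n} :=
  ⟨Nat.card (Sym2 V), by rintro _ ⟨S, -, rfl⟩; exact Set.ncard_le_card S⟩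

lemma IsInducedMatching.ncard_le [Finite V] (hS : G.IsInducedMatching S) :
    S.ncard ≤ inducedMatchingNumber G := by
  rw [inducedMatchingNumber_eq_sSup]
  exact le_csSup (bddAbove_ncard_isInducedMatching G) ⟨S, hS, rfl⟩

lemma exists_isInducedMatching_ncard_eq [Finite V] (G : SimpleGraph V) :
    ∃ S, G.IsInducedMatching S ∧ S.ncard = inducedMatchingNumber G := by
  rw [inducedMatchingNumber_eq_sSup]
  have hempty : G.IsInducedMatching ∅ := ⟨Set.empty_subset _, Set.pairwise_empty _⟩
  exact Nat.sSup_mem (s := {n | ∃ S, G.IsInducedMatching S ∧ S.ncard = n})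
    ⟨0, ∅, hempty, Set.ncard_empty _⟩ (bddAbove_ncard_isInducedMatching G)

lemma IsInducedMatching.image {U : Set V} {f : V → W} (hS : G.IsInducedMatching S)
    (hSU : S ⊆ U.sym2) (hf : U.InjOn f)
    (hadj : ∀ a ∈ U, ∀ b ∈ U, H.Adj (f a) (f b) ↔ G.Adj a b) :
    H.IsInducedMatching (Sym2.map f '' S) ∧ (Sym2.map f '' S).ncard = S.ncard := by
  have hinj : S.InjOn (Sym2.map f) := hf.sym2_map.mono hSU
  have hU : ∀ e ∈ S, ∀ a ∈ e, a ∈ U := fun e he => Set.mem_sym2_iff_subset.1 (hSU he)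
  refine ⟨⟨?_, (hinj.pairwise_image).2 fun e he e' he' hne => ?_⟩, hinj.ncard_image⟩
  · rintro _ ⟨e, he, rfl⟩
    induction e using Sym2.ind with
    | _ a b =>
      have hab := hS.1 he
      rw [mem_edgeSet] at hab
      rw [Sym2.map_mk, mem_edgeSet]
      exact (hadj a (hU _ he a (Sym2.mem_mk_left a b)) b
        (hU _ he b (Sym2.mem_mk_right a b))).2 hab
  · intro _ hfa _ hfb
    obtain ⟨a, ha, rfl⟩ := Sym2.mem_map.1 hfa
    obtain ⟨b, hb, rfl⟩ := Sym2.mem_map.1 hfb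
    have hab := hS.2 he he' hne a ha b hb
    exact ⟨hf.ne (hU e he a ha) (hU e' he' b hb) hab.1,
      (hadj a (hU e he a ha) b (hU e' he' b hb)).not.2 hab.2⟩

lemma IsInducedMatching.insert [Finite V] (hS : G.IsInducedMatching S) (he : e ∈ G.edgeSet)
    (hfar : ∀ e' ∈ S, G.Far e e') :
    G.IsInducedMatching (insert e S) ∧ (insert e S).ncard = S.ncard + 1 := by
  have heS : e ∉ S := fun h => not_far_self e (hfar e h)
  refine ⟨⟨Set.insert_subset he hS.1, Set.pairwise_insert.2 ⟨hS.2, ?_⟩⟩,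
    Set.ncard_insert_of_notMem heS⟩
  exact fun e' he' _ => ⟨hfar e' he', (hfar e' he').symm⟩

variable [Finite W] {U : Set V} {f : V → W}

lemma IsInducedMatching.ncard_le_of_injOn (hS : G.IsInducedMatching S) (hSU : S ⊆ U.sym2)
    (hf : U.InjOn f) (hadj : ∀ a ∈ U, ∀ b ∈ U, H.Adj (f a) (f b) ↔ G.Adj a b) :
    S.ncard ≤ inducedMatchingNumber H := by
  obtain ⟨hT, hcard⟩ := hS.image hSU hf hadj
  exact hcard ▸ hT.ncard_le

lemma IsInducedMatching.ncard_add_one_le_of_injOn (hS : G.IsInducedMatching S)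
    (hSU : S ⊆ U.sym2) (hf : U.InjOn f)
    (hadj : ∀ a ∈ U, ∀ b ∈ U, H.Adj (f a) (f b) ↔ G.Adj a b) {c d : W} (hcd : H.Adj c d)
    (hfar : ∀ e ∈ S, ∀ a ∈ e, ∀ b ∈ s(c, d), f a ≠ b ∧ ¬H.Adj (f a) b) :
    S.ncard + 1 ≤ inducedMatchingNumber H := by
  obtain ⟨hT, hcard⟩ := hS.image hSU hf hadj
  have hfar' : ∀ e ∈ Sym2.map f '' S, H.Far s(c, d) e := by
    rintro _ ⟨e, he, rfl⟩ b hb _ hfa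
    obtain ⟨a, ha, rfl⟩ := Sym2.mem_map.1 hfa
    have := hfar e he a ha b hb
    exact ⟨fun h => this.1 h.symm, fun h => this.2 h.symm⟩
  obtain ⟨hT', hcard'⟩ := hT.insert hcd hfar'
  rw [← hcard, ← hcard']
  exact hT'.ncard_le

lemma Iso.inducedMatchingNumber_le [Finite V] (φ : G ≃g H) :
    inducedMatchingNumber G ≤ inducedMatchingNumber H := by
  obtain ⟨S, hS, hcard⟩ := G.exists_isInducedMatching_ncard_eq
  rw [← hcard]
  exact hS.ncard_le_of_injOn (U := Set.univ) (by simp) φ.injective.injOn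
    (fun a _ b _ => φ.map_adj_iff)

end SimpleGraph

open SimpleGraph

section Lozin

variable {V : Type*} {G : SimpleGraph V} {x : V} {Y Z : Set V}

@[simp] lemma lozin_adj_inl_inl {u v : {v // v ≠ x}} :
    (lozin G x Y Z).Adj (inl u) (inl v) ↔ G.Adj u v := by
  simp only [lozin, fromRel_adj, ne_eq, inl.injEq]
  exact ⟨fun h => h.2.elim id fun h => h.symm,
    fun h => ⟨fun huv => h.ne (congrArg _ huv), Or.inl h⟩⟩

@[simp] lemma lozin_adj_inl_inr {u : {v // v ≠ x}} {i : Fin 4} :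
    (lozin G x Y Z).Adj (inl u) (inr i) ↔ (i = 0 ∧ ↑u ∈ Y) ∨ (i = 3 ∧ ↑u ∈ Z) := by
  simp [lozin]

@[simp] lemma lozin_adj_inr_inl {u : {v // v ≠ x}} {i : Fin 4} :
    (lozin G x Y Z).Adj (inr i) (inl u) ↔ (i = 0 ∧ ↑u ∈ Y) ∨ (i = 3 ∧ ↑u ∈ Z) := by
  rw [adj_comm, lozin_adj_inl_inr]

@[simp] lemma lozin_adj_inr_inr {i j : Fin 4} :
    (lozin G x Y Z).Adj (inr i) (inr j) ↔ (i : ℕ) + 1 = j ∨ (j : ℕ) + 1 = i := by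
  simp only [lozin, fromRel_adj, ne_eq, inr.injEq, Fin.ext_iff]
  omega

open Classical in
noncomputable def lozinLift (x : V) (i : Fin 4) (v : V) : {v // v ≠ x} ⊕ Fin 4 :=
  if h : v = x then inr i else inl ⟨v, h⟩

@[simp] lemma lozinLift_self {i : Fin 4} : lozinLift x i x = inr i := dif_pos rfl

lemma lozinLift_of_ne {i : Fin 4} {v : V} (h : v ≠ x) : lozinLift x i v = inl ⟨v, h⟩ :=
  dif_neg h

lemma lozinLift_injective (i : Fin 4) : Injective (lozinLift x i) := by
  intro a b h
  rcases eq_or_ne a x with rfl | ha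
  · rcases eq_or_ne b a with rfl | hb
    · rfl
    · simp [lozinLift_of_ne hb] at h
  · rcases eq_or_ne b x with rfl | hb
    · simp [lozinLift_of_ne ha] at h
    · simpa [lozinLift_of_ne ha, lozinLift_of_ne hb] using h

lemma adj_iff_of_union_eq_neighborSet (hYZ : Y ∪ Z = G.neighborSet x) {v : V} :
    G.Adj x v ↔ v ∈ Y ∨ v ∈ Z := by
  rw [← mem_neighborSet, ← hYZ, Set.mem_union]

lemma lozin_adj_lozinLift_of_ne {i : Fin 4} {a b : V} (ha : a ≠ x) (hb : b ≠ x) :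
    (lozin G x Y Z).Adj (lozinLift x i a) (lozinLift x i b) ↔ G.Adj a b := by
  rw [lozinLift_of_ne ha, lozinLift_of_ne hb, lozin_adj_inl_inl]

lemma lozin_adj_lozinLift_zero (hYZ : Y ∪ Z = G.neighborSet x) {a b : V} (ha : a ∉ Z)
    (hb : b ∉ Z) :
    (lozin G x Y Z).Adj (lozinLift x 0 a) (lozinLift x 0 b) ↔ G.Adj a b := by
  by_cases hax : a = x <;> by_cases hbx : b = x
  · simp [hax, hbx]
  · simp [hax, lozinLift_of_ne hbx, adj_iff_of_union_eq_neighborSet hYZ, hb]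
  · simp [hbx, lozinLift_of_ne hax, G.adj_comm a, adj_iff_of_union_eq_neighborSet hYZ, ha]
  · exact lozin_adj_lozinLift_of_ne hax hbx

def lozinSwap (G : SimpleGraph V) (x : V) (Y Z : Set V) : lozin G x Y Z ≃g lozin G x Z Y where
  toEquiv := Equiv.sumCongr (Equiv.refl _) Fin.revPerm
  map_rel_iff' := by
    rintro (u | i) (v | j)
    · simp
    · fin_cases j <;> simp [or_comm]
    · fin_cases i <;> simp [or_comm]
    · fin_cases i <;> fin_cases j <;> simp

lemma lozin_inducedMatchingNumber_comm [Finite V] :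
    inducedMatchingNumber (lozin G x Y Z) = inducedMatchingNumber (lozin G x Z Y) :=
  le_antisymm (lozinSwap G x Y Z).inducedMatchingNumber_le
    (lozinSwap G x Z Y).inducedMatchingNumber_le

lemma ncard_add_one_le_lozin_of_mem_left [Finite V] (hYZ : Y ∪ Z = G.neighborSet x)
    (hd : Disjoint Y Z) {S : Set (Sym2 V)} (hS : G.IsInducedMatching S) {w : V}
    (hxw : s(x, w) ∈ S) (hwY : w ∈ Y) :
    S.ncard + 1 ≤ inducedMatchingNumber (lozin G x Y Z) := by
  have hSZ : S ⊆ (Zᶜ : Set V).sym2 := fun e he => Set.mem_sym2_iff_subset.2 fun v hv hvZ => by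
    have hxv : G.Adj x v := (adj_iff_of_union_eq_neighborSet hYZ).2 (Or.inr hvZ)
    exact hd.notMem_of_mem_left hwY (hS.eq_right_of_adj hxw he hv hxv ▸ hvZ)
  refine hS.ncard_add_one_le_of_injOn hSZ (lozinLift_injective 0).injOn
    (fun a ha b hb => lozin_adj_lozinLift_zero hYZ ha hb) (c := inr 2) (d := inr 3) (by simp)
    fun e he a ha b hb => ?_
  have haZ : a ∉ Z := Set.mem_sym2_iff_subset.1 (hSZ he) ha
  rcases eq_or_ne a x with rfl | hax <;> rcases Sym2.mem_iff.1 hb with rfl | rfl <;>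
    simp [lozinLift_of_ne, *]

lemma ncard_add_one_le_lozin_of_forall_notMem [Finite V] {S : Set (Sym2 V)}
    (hS : G.IsInducedMatching S) (hx : ∀ e ∈ S, x ∉ e) :
    S.ncard + 1 ≤ inducedMatchingNumber (lozin G x Y Z) := by
  have hSx : S ⊆ ({x}ᶜ : Set V).sym2 := fun e he =>
    Set.mem_sym2_iff_subset.2 fun v hv (hvx : v = x) => hx e he (hvx ▸ hv)
  refine hS.ncard_add_one_le_of_injOn hSx (lozinLift_injective 0).injOn
    (fun a ha b hb => lozin_adj_lozinLift_of_ne ha hb) (c := inr 1) (d := inr 2) (by simp)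
    fun e he a ha b hb => ?_
  have hax : a ≠ x := Set.mem_sym2_iff_subset.1 (hSx he) ha
  rcases Sym2.mem_iff.1 hb with rfl | rfl <;> simp [lozinLift_of_ne hax]

lemma inducedMatchingNumber_add_one_le_lozin [Finite V] (hYZ : Y ∪ Z = G.neighborSet x)
    (hd : Disjoint Y Z) :
    inducedMatchingNumber G + 1 ≤ inducedMatchingNumber (lozin G x Y Z) := by
  obtain ⟨S, hS, hcard⟩ := G.exists_isInducedMatching_ncard_eq
  rw [← hcard]
  by_cases hx : ∃ e ∈ S, x ∈ e
  · obtain ⟨e, he, hxe⟩ := hx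
    obtain ⟨w, rfl⟩ := Sym2.mem_iff_exists.1 hxe
    rcases (adj_iff_of_union_eq_neighborSet hYZ).1 (hS.1 he) with hwY | hwZ
    · exact ncard_add_one_le_lozin_of_mem_left hYZ hd hS he hwY
    · rw [lozin_inducedMatchingNumber_comm]
      exact ncard_add_one_le_lozin_of_mem_left ((Set.union_comm Z Y).trans hYZ) hd.symm hS he hwZ
  · simp only [not_exists, not_and] at hx
    exact ncard_add_one_le_lozin_of_forall_notMem hS hx

variable {S : Set (Sym2 ({v // v ≠ x} ⊕ Fin 4))}

def lozinCollapse (x : V) : {v // v ≠ x} ⊕ Fin 4 → V :=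
  Sum.elim Subtype.val fun _ => x

lemma injOn_lozinCollapse : (Set.range inl).InjOn (lozinCollapse x) := by
  rintro _ ⟨u, rfl⟩ _ ⟨v, rfl⟩ h
  exact congrArg inl (Subtype.ext h)

lemma adj_lozinCollapse_iff {p q : {v // v ≠ x} ⊕ Fin 4} (hp : p ∈ Set.range inl)
    (hq : q ∈ Set.range inl) :
    G.Adj (lozinCollapse x p) (lozinCollapse x q) ↔ (lozin G x Y Z).Adj p q := by
  obtain ⟨u, rfl⟩ := hp
  obtain ⟨v, rfl⟩ := hq
  simp [lozinCollapse]

lemma lozin_ncard_inter_sym2_range_inl_le [Finite V] (hS : (lozin G x Y Z).IsInducedMatching S) :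
    (S ∩ (Set.range inl).sym2).ncard ≤ inducedMatchingNumber G := by
  refine (hS.mono Set.inter_subset_left).ncard_le_of_injOn Set.inter_subset_right
    injOn_lozinCollapse fun _ hp _ hq => adj_lozinCollapse_iff hp hq

lemma lozin_ncard_inter_sym2_range_inl_add_one_le [Finite V] (hYZ : Y ∪ Z = G.neighborSet x)
    (hS : (lozin G x Y Z).IsInducedMatching S) {i : Fin 4} {u : {v // v ≠ x}}
    (hu : s(inr i, inl u) ∈ S) (h0 : ∃ e ∈ S, inr 0 ∈ e) (h3 : ∃ e ∈ S, inr 3 ∈ e) :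
    (S ∩ (Set.range inl).sym2).ncard + 1 ≤ inducedMatchingNumber G := by
  have hxu : G.Adj x u := by
    have := hS.1 hu
    rw [mem_edgeSet, lozin_adj_inr_inl] at this
    exact (adj_iff_of_union_eq_neighborSet hYZ).2 (by tauto)
  refine (hS.mono Set.inter_subset_left).ncard_add_one_le_of_injOn Set.inter_subset_right
    injOn_lozinCollapse (fun _ hp _ hq => adj_lozinCollapse_iff hp hq) hxu ?_
  rintro e ⟨he, heO⟩ _ hv b hb
  obtain ⟨v, rfl⟩ := Set.mem_sym2_iff_subset.1 heO hv
  have hnew : ∀ j, inr j ∉ e := fun j hj => by simpa using Set.mem_sym2_iff_subset.1 heO hj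
  simp only [lozinCollapse, elim_inl]
  rcases Sym2.mem_iff.1 hb with rfl | rfl
  · refine ⟨v.2, fun hvx => ?_⟩
    rcases (adj_iff_of_union_eq_neighborSet hYZ).1 hvx.symm with hvY | hvZ
    · obtain ⟨e₀, he₀, h0e⟩ := h0
      exact hnew 0 (hS.eq_of_mem_of_mem he₀ he h0e hv (Or.inr (by simp [hvY])) ▸ h0e)
    · obtain ⟨e₃, he₃, h3e⟩ := h3
      exact hnew 3 (hS.eq_of_mem_of_mem he₃ he h3e hv (Or.inr (by simp [hvZ])) ▸ h3e)
  · have hne : e ≠ s(inr i, inl u) := fun h => hnew i (h ▸ Sym2.mem_mk_left _ _)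
    simpa [Subtype.ext_iff] using hS.2 he hu hne (inl v) hv (inl u) (Sym2.mem_mk_right _ _)

lemma lozin_ncard_le_of_forall_inr_three_notMem [Finite V]
    (hS : (lozin G x Y Z).IsInducedMatching S) (h3 : ∀ e ∈ S, inr 3 ∉ e) :
    S.ncard ≤ inducedMatchingNumber G + 1 := by
  have hmeet : ∀ e ∈ S \ (Set.range inl).sym2, inr 0 ∈ e ∨ inr 1 ∈ e := by
    rintro e ⟨he, heO⟩
    obtain ⟨j, hj⟩ := Sum.exists_inr_mem_of_notMem_sym2_range_inl heO
    fin_cases j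
    · exact Or.inl hj
    · exact Or.inr hj
    · obtain ⟨p, rfl⟩ := Sym2.mem_iff_exists.1 hj
      have hp := hS.1 he
      rw [mem_edgeSet] at hp
      cases p with
      | inl w => simp at hp
      | inr k =>
        fin_cases k <;> simp at hp
        · exact Or.inr (Sym2.mem_mk_right _ _)
        · exact (h3 _ he (Sym2.mem_mk_right _ _)).elim
    · exact (h3 e he hj).elim
  have hnew : (S \ (Set.range inl).sym2).ncard ≤ 1 := by
    refine (Set.ncard_le_one_iff (Set.toFinite _)).2 fun he he' => ?_
    rcases hmeet _ he with h | h <;> rcases hmeet _ he' with h' | h' <;>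
      exact hS.eq_of_mem_of_mem he.1 he'.1 h h' (by simp)
  have hO := lozin_ncard_inter_sym2_range_inl_le hS
  have hsplit := Set.ncard_inter_add_ncard_sdiff_eq_ncard S (Set.range inl).sym2
  omega

lemma lozin_ncard_le_of_forall_inr_zero_notMem [Finite V]
    (hS : (lozin G x Y Z).IsInducedMatching S) (h0 : ∀ e ∈ S, inr 0 ∉ e) :
    S.ncard ≤ inducedMatchingNumber G + 1 := by
  let σ := lozinSwap G x Y Z
  obtain ⟨hS', hcard⟩ := hS.image (U := Set.univ) (f := σ) (by simp) σ.injective.injOn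
    fun _ _ _ _ => σ.map_adj_iff
  rw [← hcard]
  refine lozin_ncard_le_of_forall_inr_three_notMem hS' ?_
  rintro _ ⟨e, he, rfl⟩ h
  obtain ⟨p, hp, hσp⟩ := Sym2.mem_map.1 h
  obtain rfl : p = inr 0 := σ.injective (hσp.trans rfl)
  exact h0 e he hp

lemma lozin_ncard_le_of_inr_zero_mem_of_inr_three_mem [Finite V] (hYZ : Y ∪ Z = G.neighborSet x)
    (hS : (lozin G x Y Z).IsInducedMatching S) (h0 : ∃ e ∈ S, inr 0 ∈ e)
    (h3 : ∃ e ∈ S, inr 3 ∈ e) :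
    S.ncard ≤ inducedMatchingNumber G + 1 := by
  obtain ⟨e₀, he₀, h0e⟩ := h0
  obtain ⟨e₃, he₃, h3e⟩ := h3
  have hpartner : ∃ i u, s(inr i, inl u) ∈ S := by
    obtain ⟨p, rfl⟩ := Sym2.mem_iff_exists.1 h0e
    obtain ⟨q, rfl⟩ := Sym2.mem_iff_exists.1 h3e
    cases p with
    | inl u => exact ⟨0, u, he₀⟩
    | inr j =>
      cases q with
      | inl u => exact ⟨3, u, he₃⟩
      | inr k =>
        have hp := hS.1 he₀
        have hq := hS.1 he₃
        rw [mem_edgeSet, lozin_adj_inr_inr] at hp hq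
        obtain rfl : j = 1 := by ext; simp at hp; omega
        obtain rfl : k = 2 := by ext; simp at hq; omega
        have := hS.eq_of_mem_of_mem he₀ he₃ (Sym2.mem_mk_right _ _) (Sym2.mem_mk_right _ _)
          (by simp)
        simp at this
  have hnew : (S \ (Set.range inl).sym2).ncard ≤ 2 := by
    refine (hS.ncard_le_of_forall_exists_mem Set.sdiff_subset (Set.toFinite {inr 0, inr 3})
      ?_).trans (Set.ncard_pair (by simp)).le
    rintro e ⟨he, heO⟩
    obtain ⟨j, hj⟩ := Sum.exists_inr_mem_of_notMem_sym2_range_inl heO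
    fin_cases j
    · exact ⟨_, by simp, hj⟩
    · exact ⟨_, by simp, hS.eq_of_mem_of_mem he₀ he h0e hj (by simp) ▸ h0e⟩
    · exact ⟨_, by simp, hS.eq_of_mem_of_mem he₃ he h3e hj (by simp) ▸ h3e⟩
    · exact ⟨_, by simp, hj⟩
  obtain ⟨i, u, hu⟩ := hpartner
  have hO :=
    lozin_ncard_inter_sym2_range_inl_add_one_le hYZ hS hu ⟨_, he₀, h0e⟩ ⟨_, he₃, h3e⟩
  have hsplit := Set.ncard_inter_add_ncard_sdiff_eq_ncard S (Set.range inl).sym2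
  omega

lemma lozin_inducedMatchingNumber_le [Finite V] (hYZ : Y ∪ Z = G.neighborSet x) :
    inducedMatchingNumber (lozin G x Y Z) ≤ inducedMatchingNumber G + 1 := by
  obtain ⟨S, hS, hcard⟩ := (lozin G x Y Z).exists_isInducedMatching_ncard_eq
  rw [← hcard]
  by_cases h0 : ∃ e ∈ S, inr 0 ∈ e
  · by_cases h3 : ∃ e ∈ S, inr 3 ∈ e
    · exact lozin_ncard_le_of_inr_zero_mem_of_inr_three_mem hYZ hS h0 h3
    · exact lozin_ncard_le_of_forall_inr_three_notMem hS fun e he h => h3 ⟨e, he, h⟩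
  · exact lozin_ncard_le_of_forall_inr_zero_notMem hS fun e he h => h0 ⟨e, he, h⟩

end Lozin

/-- For any vertex `x` and any partition `N_G(x) = Y ∪ Z`, the Lozin transform satisfies
`im(L_x(G;Y,Z)) = im(G) + 1`. -/
theorem stmt_7 {V : Type*} [Fintype V] (G : SimpleGraph V) (x : V) (Y Z : Set V)
    (hYZ : Y ∪ Z = G.neighborSet x) (hd : Disjoint Y Z) :
    inducedMatchingNumber (lozin G x Y Z) = inducedMatchingNumber G + 1 :=
  le_antisymm (lozin_inducedMatchingNumber_le hYZ) (inducedMatchingNumber_add_one_le_lozin hYZ hd)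
end

section
/- Let G be a simple graph, x a vertex, and consider the Lozin transform H = L_x(G; N_G(x), ∅) in which all of N_G(x) is attached to the new vertex y of the added path y–a–b–z. Then the independence complex of H is homotopy equivalent to the suspension of the independence complex of G. -/
/-- An abstract simplicial complex on the vertex type `V`. -/
structure SComplex (V : Type*) where
  faces : Set (Finset V)
  down_closed : ∀ ⦃s t : Finset V⦄, s ∈ faces → t ⊆ s → t ∈ faces

/-- The independence complex of a graph: faces are the (finite) independent sets. -/
def indComplex {V : Type*} (G : SimpleGraph V) : SComplex V where
  faces := {s : Finset V | ∀ a ∈ s, ∀ b ∈ s, ¬ G.Adj a b}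
  down_closed := fun _ _ hs hts a ha b hb => hs a (hts ha) b (hts hb)

/-- The geometric realization of an abstract simplicial complex, as a subspace of `V → ℝ`. -/
def geomRealization {V : Type*} (K : SComplex V) : Set (V → ℝ) :=
  {f | (∀ v, 0 ≤ f v) ∧
    ∃ s ∈ K.faces, (∀ v, v ∉ s → f v = 0) ∧ ∑ v ∈ s, f v = 1}

/-- The gluing relation for the unreduced suspension: `X × I` with `X × {0}` collapsed to
the pole `inr false` and `X × {1}` collapsed to the pole `inr true`. -/
def suspRel (X : Type*) : (X × unitInterval ⊕ Bool) → (X × unitInterval ⊕ Bool) → Prop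
  | Sum.inl a, Sum.inl b => a = b ∨ (a.2 = 0 ∧ b.2 = 0) ∨ (a.2 = 1 ∧ b.2 = 1)
  | Sum.inl a, Sum.inr i => (a.2 = 0 ∧ i = false) ∨ (a.2 = 1 ∧ i = true)
  | Sum.inr i, Sum.inl a => (a.2 = 0 ∧ i = false) ∨ (a.2 = 1 ∧ i = true)
  | Sum.inr i, Sum.inr j => i = j

/-- The unreduced suspension of a topological space. -/
def Susp (X : Type*) [TopologicalSpace X] : Type _ := Quot (suspRel X)

instance (X : Type*) [TopologicalSpace X] : TopologicalSpace (Susp X) :=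
  instTopologicalSpaceQuot

/-!
Write `σ = 2t - 1` for the suspension coordinate and `y, a, b, z` for the new path. The map
`Σ|Ind G| → |Ind H|` sends `(f, t)` to `(1 - |σ|) f + σ⁺ b + σ⁻ z`, where `f` is read on `H`
with `y` in place of `x`: since `y` has the neighbourhood of `x` and `b`, `z` see nothing of the
copy of `G`, this is a point of `|Ind H|`. Conversely a point `h` of `|Ind H|` carries the mass
`s = h a + h z` towards `z` and `n = h b` towards `b`, and one of them vanishes because `b` is
adjacent to `a` and `z`; it is sent to the point `(h|_G / (1 - s - n), 1/2 + n - s)`, collapsed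
to a pole once `s` or `n` reaches `1/2`. One composite merely reparametrizes the meridians. The
other is joined to the identity along straight lines, because together with the support of `h`
the support of its image stays independent: the only vertex it can add is `z`, and only when
`h b = 0`.
-/

open Finset

section Realization

variable {W : Type*}

theorem sum_eq_one_of_mem_geomRealization {K : SComplex W} {f : W → ℝ}
    (hf : f ∈ geomRealization K) {s : Finset W} (hs : ∀ w ∉ s, f w = 0) :
    ∑ w ∈ s, f w = 1 := by
  classical
  obtain ⟨-, t, -, ht, hsum⟩ := hf
  rw [sum_subset subset_union_left fun w _ hw => hs w hw,
    ← sum_subset subset_union_right fun w _ hw => ht w hw, hsum]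

variable {H : SimpleGraph W}

theorem not_adj_of_mem_geomRealization {f : W → ℝ}
    (hf : f ∈ geomRealization (indComplex H)) {a b : W} (ha : f a ≠ 0) (hb : f b ≠ 0) :
    ¬ H.Adj a b := by
  obtain ⟨-, s, hs, hvan, -⟩ := hf
  exact hs a (not_imp_comm.1 (hvan a) ha) b (not_imp_comm.1 (hvan b) hb)

theorem mem_geomRealization_indComplex_of_support {f : W → ℝ} (hnn : ∀ w, 0 ≤ f w) (s : Finset W)
    (hs : ∀ w ∉ s, f w = 0) (hsum : ∑ w ∈ s, f w = 1)
    (hind : ∀ a b, f a ≠ 0 → f b ≠ 0 → ¬ H.Adj a b) :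
    f ∈ geomRealization (indComplex H) := by
  classical
  refine ⟨hnn, s.filter (f · ≠ 0), fun a ha b hb => ?_, fun w hw => ?_, ?_⟩
  · exact hind a b (mem_filter.1 ha).2 (mem_filter.1 hb).2
  · by_contra hne
    exact hw (mem_filter.2 ⟨not_imp_comm.1 (hs w) hne, hne⟩)
  · rwa [sum_filter_ne_zero]

theorem single_mem_geomRealization [DecidableEq W] (w : W) :
    Pi.single w 1 ∈ geomRealization (indComplex H) := by
  have hsupp : ∀ v, (Pi.single w 1 : W → ℝ) v ≠ 0 → v = w :=
    fun v hv => by_contra fun h => hv (Pi.single_eq_of_ne h 1)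
  refine mem_geomRealization_indComplex_of_support
    (Pi.single_nonneg.2 zero_le_one : (0 : W → ℝ) ≤ Pi.single w 1) {w}
    (fun v hv => Pi.single_eq_of_ne (by simpa using hv) 1) (by simp) fun a b ha hb => ?_
  rw [hsupp a ha, hsupp b hb]
  exact H.irrefl

theorem segment_mem_geomRealization {f g : W → ℝ} (hf : f ∈ geomRealization (indComplex H))
    (hg : g ∈ geomRealization (indComplex H))
    (hind : ∀ a b, (f a ≠ 0 ∨ g a ≠ 0) → (f b ≠ 0 ∨ g b ≠ 0) → ¬ H.Adj a b)
    {c : ℝ} (hc₀ : 0 ≤ c) (hc₁ : c ≤ 1) :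
    (fun w => (1 - c) * f w + c * g w) ∈ geomRealization (indComplex H) := by
  classical
  obtain ⟨hfnn, s, -, hfs, -⟩ := id hf
  obtain ⟨hgnn, t, -, hgt, -⟩ := id hg
  have hfst : ∀ w ∉ s ∪ t, f w = 0 := fun w hw => hfs w fun h => hw (mem_union_left t h)
  have hgst : ∀ w ∉ s ∪ t, g w = 0 := fun w hw => hgt w fun h => hw (mem_union_right s h)
  refine mem_geomRealization_indComplex_of_support
    (fun w => add_nonneg (mul_nonneg (by linarith) (hfnn w)) (mul_nonneg hc₀ (hgnn w)))
    (s ∪ t) (fun w hw => by simp [hfst w hw, hgst w hw]) ?_ fun a b ha hb => ?_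
  · rw [sum_add_distrib, ← mul_sum, ← mul_sum, sum_eq_one_of_mem_geomRealization hf hfst,
      sum_eq_one_of_mem_geomRealization hg hgst]
    ring
  · have hsupp : ∀ w, (1 - c) * f w + c * g w ≠ 0 → f w ≠ 0 ∨ g w ≠ 0 := by
      intro w hw
      by_contra! h
      simp [h.1, h.2] at hw
    exact hind a b (hsupp a ha) (hsupp b hb)

theorem homotopic_of_supports_independent {Y : Type*} [TopologicalSpace Y]
    (f g : C(Y, geomRealization (indComplex H)))
    (hind : ∀ y a b, ((f y).1 a ≠ 0 ∨ (g y).1 a ≠ 0) → ((f y).1 b ≠ 0 ∨ (g y).1 b ≠ 0) →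
      ¬ H.Adj a b) :
    f.Homotopic g :=
  ⟨{ toFun := fun p => ⟨fun w => (1 - p.1) * (f p.2).1 w + p.1 * (g p.2).1 w,
        segment_mem_geomRealization (f p.2).2 (g p.2).2 (hind p.2) p.1.2.1 p.1.2.2⟩
     continuous_toFun := by
       have hf : Continuous fun y => (f y).1 := continuous_subtype_val.comp f.continuous
       have hg : Continuous fun y => (g y).1 := continuous_subtype_val.comp g.continuous
       refine .subtype_mk (continuous_pi fun w => ?_) _
       have hfw := continuous_apply w |>.comp hf
       have hgw := continuous_apply w |>.comp hg
       fun_prop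
     map_zero_left := fun y => by ext; simp
     map_one_left := fun y => by ext; simp }⟩

end Realization

namespace Susp

open unitInterval

variable {X Y : Type*} [TopologicalSpace X] [TopologicalSpace Y]

def mk (p : X) (t : I) : Susp X := Quot.mk _ (.inl (p, t))

def south : Susp X := Quot.mk _ (.inr false)

def north : Susp X := Quot.mk _ (.inr true)

theorem mk_zero (p : X) : mk p 0 = south := Quot.sound (Or.inl ⟨rfl, rfl⟩)

theorem mk_one (p : X) : mk p 1 = north := Quot.sound (Or.inr ⟨rfl, rfl⟩)

@[fun_prop]
theorem _root_.Continuous.suspMk {Z : Type*} [TopologicalSpace Z] {f : Z → X} {g : Z → I}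
    (hf : Continuous f) (hg : Continuous g) : Continuous fun z => mk (f z) (g z) :=
  continuous_quot_mk.comp (continuous_inl.comp (hf.prodMk hg))

@[elab_as_elim]
theorem ind {P : Susp X → Prop} (south : P south) (north : P north)
    (mk : ∀ p t, P (mk p t)) (q : Susp X) : P q :=
  Quot.ind (by rintro (⟨p, t⟩ | (_ | _)); exacts [mk p t, south, north]) q

def lift (g : C(X × I, Y)) (s n : Y) (hs : ∀ p, g (p, 0) = s) (hn : ∀ p, g (p, 1) = n) :
    C(Susp X, Y) where
  toFun := Quot.lift (Sum.elim g fun b => cond b n s) <| by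
    rintro (⟨p, t⟩ | (_ | _)) (⟨q, u⟩ | (_ | _)) h <;> simp only [suspRel] at h
    all_goals aesop
  continuous_toFun := continuous_quot_lift _ (g.continuous.sumElim continuous_of_discreteTopology)

@[simp]
theorem lift_mk (g : C(X × I, Y)) (s n : Y) (hs hn) (p : X) (t : I) :
    lift g s n hs hn (mk p t) = g (p, t) := rfl

@[simp]
theorem lift_south (g : C(X × I, Y)) (s n : Y) (hs hn) : lift g s n hs hn south = s := rfl

@[simp]
theorem lift_north (g : C(X × I, Y)) (s n : Y) (hs hn) : lift g s n hs hn north = n := rfl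

theorem homotopic_id_of_reparam (F : C(Susp X, Susp X)) {ρ : I → I} (hρ : Continuous ρ)
    (h₀ : ρ 0 = 0) (h₁ : ρ 1 = 1) (hs : F south = south) (hn : F north = north)
    (hmk : ∀ p t, t ≠ 0 → t ≠ 1 → F (mk p t) = mk p (ρ t)) :
    F.Homotopic (ContinuousMap.id _) := by
  let R := Path.Homotopy.reparam Path.id ρ hρ h₀ h₁
  let meridians : C(X × I, C(I, Susp X)) :=
    ContinuousMap.curry ⟨fun q => mk q.1.1 (R (q.2, q.1.2)), by fun_prop⟩
  let K := lift meridians (.const I south) (.const I north)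
    (fun p => by ext s; simp [meridians, R.source, mk_zero])
    (fun p => by ext s; simp [meridians, R.target, mk_one])
  refine .symm ⟨⟨fun q => K.uncurry (q.2, q.1), by fun_prop⟩, fun q => ?_, fun q => ?_⟩
  · induction q using ind <;> simp [K, meridians]
  · induction q using ind with
    | south => simp [K, hs]
    | north => simp [K, hn]
    | mk p t =>
      by_cases ht : t = 0
      · simp [K, meridians, ht, mk_zero, hs]
      by_cases ht' : t = 1
      · simp [K, meridians, ht', mk_one, hn]
      simp [K, meridians, hmk p t ht ht']

end Susp

namespace Lozin

variable {V : Type*} {G : SimpleGraph V} {x : V} {Y Z : Set V}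

theorem adj_inl_inl {u v : {v : V // v ≠ x}} :
    (lozin G x Y Z).Adj (.inl u) (.inl v) ↔ G.Adj u v := by
  simp only [lozin, SimpleGraph.fromRel_adj, ne_eq, Sum.inl.injEq]
  exact ⟨fun h => h.2.elim id G.adj_symm, fun h => ⟨fun huv => G.irrefl (huv ▸ h), .inl h⟩⟩

theorem adj_inl_inr {u : {v : V // v ≠ x}} {i : Fin 4} :
    (lozin G x Y Z).Adj (.inl u) (.inr i) ↔ i = 0 ∧ u.1 ∈ Y ∨ i = 3 ∧ u.1 ∈ Z := by
  simp [lozin]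

theorem adj_inr_inr {i j : Fin 4} :
    (lozin G x Y Z).Adj (.inr i) (.inr j) ↔ (i : ℕ) + 1 = j ∨ (j : ℕ) + 1 = i := by
  simp only [lozin, SimpleGraph.fromRel_adj, ne_eq, Sum.inr.injEq]
  revert i j
  decide

open Classical in
noncomputable def embed (x v : V) : {v : V // v ≠ x} ⊕ Fin 4 :=
  if h : v = x then .inr 0 else .inl ⟨v, h⟩

theorem embed_self : embed x x = .inr 0 := dif_pos rfl

theorem embed_of_ne {v : V} (h : v ≠ x) : embed x v = .inl ⟨v, h⟩ := dif_neg h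

theorem embed_injective : Function.Injective (embed x) := by
  intro u v h
  by_cases hu : u = x <;> by_cases hv : v = x
  · rw [hu, hv]
  all_goals simp_all [embed_self, embed_of_ne]

theorem embed_ne_inr {v : V} {i : Fin 4} (hi : i ≠ 0) : embed x v ≠ .inr i := by
  by_cases hv : v = x
  · simp [hv, embed_self, Ne.symm hi]
  · simp [embed_of_ne hv]

theorem eq_embed_or_path (w : {v : V // v ≠ x} ⊕ Fin 4) :
    (∃ v, w = embed x v) ∨ w = .inr 1 ∨ w = .inr 2 ∨ w = .inr 3 := by
  rcases w with u | i
  · exact .inl ⟨u, (embed_of_ne u.2).symm⟩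
  · fin_cases i
    exacts [.inl ⟨x, embed_self.symm⟩, .inr (.inl rfl), .inr (.inr (.inl rfl)),
      .inr (.inr (.inr rfl))]

theorem adj_embed_embed {u v : V} :
    (lozin G x (G.neighborSet x) Z).Adj (embed x u) (embed x v) ↔ G.Adj u v := by
  by_cases hu : u = x <;> by_cases hv : v = x
  · subst hu hv; simp [embed_self]
  · subst hu; simp [embed_self, embed_of_ne hv, adj_inl_inr, SimpleGraph.adj_comm]
  · subst hv; simp [embed_self, embed_of_ne hu, adj_inl_inr, SimpleGraph.adj_comm]
  · simp [embed_of_ne hu, embed_of_ne hv, adj_inl_inl]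

theorem not_adj_embed_two {v : V} : ¬ (lozin G x Y Z).Adj (embed x v) (.inr 2) := by
  by_cases hv : v = x
  · simp [hv, embed_self, adj_inr_inr]
  · simp [embed_of_ne hv, adj_inl_inr]

theorem adj_inr_three_iff {w : {v : V // v ≠ x} ⊕ Fin 4} :
    (lozin G x Y ∅).Adj w (.inr 3) ↔ w = .inr 2 := by
  rcases w with u | i
  · simp [adj_inl_inr]
  · simp only [adj_inr_inr, Sum.inr.injEq]
    revert i
    decide

theorem adj_inr_one_two : (lozin G x Y Z).Adj (.inr 1) (.inr 2) := by
  simp [adj_inr_inr]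

theorem adj_inr_two_three : (lozin G x Y Z).Adj (.inr 2) (.inr 3) := by
  simp [adj_inr_inr]

open unitInterval

local notation "𝓛" => lozin G x (G.neighborSet x) ∅

theorem sum_image_embed_union [DecidableEq V] (s : Finset V)
    (h : {v : V // v ≠ x} ⊕ Fin 4 → ℝ) :
    ∑ w ∈ s.image (embed x) ∪ {.inr 1, .inr 2, .inr 3}, h w =
      ∑ v ∈ s, h (embed x v) + (h (.inr 1) + h (.inr 2) + h (.inr 3)) := by
  have hdisj : Disjoint (s.image (embed x)) {.inr 1, .inr 2, .inr 3} := by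
    simp [disjoint_left, embed_ne_inr]
  rw [sum_union hdisj, sum_image fun u _ v _ h => embed_injective h]
  simp [add_assoc]

variable (x) in
/-- The meridian through `f` runs from `z` (at `t = 0`) through the copy of `f` to `b`. -/
noncomputable def suspVal (f : V → ℝ) (t : ℝ) : {v : V // v ≠ x} ⊕ Fin 4 → ℝ :=
  Sum.elim (fun u => (1 - |2 * t - 1|) * f u)
    ![(1 - |2 * t - 1|) * f x, 0, (2 * t - 1)⁺, (2 * t - 1)⁻]

section suspVal

variable {f : V → ℝ} {t : ℝ}

@[simp]
theorem suspVal_embed (v : V) : suspVal x f t (embed x v) = (1 - |2 * t - 1|) * f v := by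
  by_cases hv : v = x
  · subst hv; simp [suspVal, embed_self]
  · simp [suspVal, embed_of_ne hv]

@[simp] theorem suspVal_inr_one : suspVal x f t (.inr 1) = 0 := rfl
@[simp] theorem suspVal_inr_two : suspVal x f t (.inr 2) = (2 * t - 1)⁺ := rfl
@[simp] theorem suspVal_inr_three : suspVal x f t (.inr 3) = (2 * t - 1)⁻ := rfl

theorem suspVal_ne_zero {w : {v : V // v ≠ x} ⊕ Fin 4} (hw : suspVal x f t w ≠ 0) :
    (∃ v, f v ≠ 0 ∧ w = embed x v) ∨ (w = .inr 2 ∧ 0 < 2 * t - 1) ∨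
      (w = .inr 3 ∧ 2 * t - 1 < 0) := by
  rcases eq_embed_or_path w with ⟨v, rfl⟩ | rfl | rfl | rfl
  · exact .inl ⟨v, fun hv => hw (by simp [hv]), rfl⟩
  · simp at hw
  · exact .inr (.inl ⟨rfl, posPart_pos_iff.1 ((posPart_nonneg _).lt_of_ne' hw)⟩)
  · exact .inr (.inr ⟨rfl, negPart_pos_iff.1 ((negPart_nonneg _).lt_of_ne' hw)⟩)

theorem suspVal_mem (hf : f ∈ geomRealization (indComplex G)) (ht : t ∈ Set.Icc (0 : ℝ) 1) :
    suspVal x f t ∈ geomRealization (indComplex 𝓛) := by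
  classical
  obtain ⟨hnn, s, -, hs, hsum⟩ := id hf
  have hσ : |2 * t - 1| ≤ 1 := abs_le.2 ⟨by linarith [ht.1], by linarith [ht.2]⟩
  refine mem_geomRealization_indComplex_of_support (fun w => ?_)
    (s.image (embed x) ∪ {.inr 1, .inr 2, .inr 3}) (fun w hw => ?_) ?_ fun a b ha hb => ?_
  · rcases eq_embed_or_path w with ⟨v, rfl⟩ | rfl | rfl | rfl
    · simpa using mul_nonneg (sub_nonneg.2 hσ) (hnn v)
    all_goals simp
  · rcases eq_embed_or_path w with ⟨v, rfl⟩ | rfl | rfl | rfl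
    · simp [hs v (fun hv => hw (mem_union_left _ (mem_image_of_mem _ hv)))]
    all_goals simp at hw
  · rw [sum_image_embed_union]
    simp only [suspVal_embed, ← mul_sum, hsum, suspVal_inr_one, suspVal_inr_two,
      suspVal_inr_three]
    linarith [posPart_add_negPart (2 * t - 1)]
  · rcases suspVal_ne_zero ha with ⟨u, hu, rfl⟩ | ⟨rfl, hpos⟩ | ⟨rfl, hneg⟩ <;>
    rcases suspVal_ne_zero hb with ⟨v, hv, rfl⟩ | ⟨rfl, hpos'⟩ | ⟨rfl, hneg'⟩
    · rw [adj_embed_embed]; exact not_adj_of_mem_geomRealization hf hu hv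
    · exact not_adj_embed_two
    · exact adj_inr_three_iff.not.2 (embed_ne_inr (by decide))
    · exact fun h => not_adj_embed_two h.symm
    · exact SimpleGraph.irrefl _
    · linarith
    · exact fun h => adj_inr_three_iff.not.2 (embed_ne_inr (by decide)) h.symm
    · linarith
    · exact SimpleGraph.irrefl _

end suspVal

theorem continuous_suspVal : Continuous fun q : (V → ℝ) × ℝ => suspVal x q.1 q.2 := by
  refine continuous_pi fun w => ?_
  rcases w with u | i
  · simp only [suspVal, Sum.elim_inl]
    fun_prop
  · fin_cases i <;> simp [suspVal] <;> fun_prop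

open Classical in
theorem suspVal_zero_eq_single (f : V → ℝ) : suspVal x f 0 = Pi.single (.inr 3) 1 := by
  ext w
  rcases eq_embed_or_path w with ⟨v, rfl⟩ | rfl | rfl | rfl <;> simp [embed_ne_inr]

open Classical in
theorem suspVal_one_eq_single (f : V → ℝ) : suspVal x f 1 = Pi.single (.inr 2) 1 := by
  ext w
  rcases eq_embed_or_path w with ⟨v, rfl⟩ | rfl | rfl | rfl <;> simp [embed_ne_inr] <;> norm_num

variable (G x) in
open Classical in
noncomputable def toLozin :
    C(Susp (geomRealization (indComplex G)), geomRealization (indComplex 𝓛)) :=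
  Susp.lift ⟨fun q => ⟨suspVal x q.1 q.2, suspVal_mem q.1.2 q.2.2⟩,
      .subtype_mk (continuous_suspVal.comp
        ((continuous_subtype_val.comp continuous_fst).prodMk
          (continuous_subtype_val.comp continuous_snd))) _⟩
    ⟨Pi.single (.inr 3) 1, single_mem_geomRealization _⟩
    ⟨Pi.single (.inr 2) 1, single_mem_geomRealization _⟩
    (fun p => Subtype.ext (suspVal_zero_eq_single p.1))
    (fun p => Subtype.ext (suspVal_one_eq_single p.1))

@[simp]
theorem coe_toLozin_mk (p : geomRealization (indComplex G)) (t : I) :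
    (toLozin G x (Susp.mk p t) : {v : V // v ≠ x} ⊕ Fin 4 → ℝ) = suspVal x p t :=
  rfl

/-- The mass on `a` counts towards `z`, whose neighbourhood `{b}` lies in that of `a`. -/
def southMass (h : {v : V // v ≠ x} ⊕ Fin 4 → ℝ) : ℝ := h (.inr 1) + h (.inr 3)

def northMass (h : {v : V // v ≠ x} ⊕ Fin 4 → ℝ) : ℝ := h (.inr 2)

@[fun_prop]
theorem continuous_southMass : Continuous (southMass (x := x)) := by
  unfold southMass; fun_prop

@[fun_prop]
theorem continuous_northMass : Continuous (northMass (x := x)) := by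
  unfold northMass; fun_prop

noncomputable def toBase (h : {v : V // v ≠ x} ⊕ Fin 4 → ℝ) (v : V) : ℝ :=
  h (embed x v) / (1 - southMass h - northMass h)

noncomputable def height (h : {v : V // v ≠ x} ⊕ Fin 4 → ℝ) : I :=
  Set.projIcc 0 1 zero_le_one (1 / 2 + northMass h - southMass h)

section masses

variable {h : {v : V // v ≠ x} ⊕ Fin 4 → ℝ}
  (hh : h ∈ geomRealization (indComplex (lozin G x (G.neighborSet x) ∅)))
include hh

theorem southMass_nonneg : 0 ≤ southMass h := add_nonneg (hh.1 _) (hh.1 _)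

theorem northMass_nonneg : 0 ≤ northMass h := hh.1 _

theorem northMass_eq_zero_of_southMass_ne_zero (hs : southMass h ≠ 0) : northMass h = 0 := by
  by_contra hn
  have : h (.inr 1) ≠ 0 ∨ h (.inr 3) ≠ 0 := by
    by_contra! h0
    simp [southMass, h0] at hs
  rcases this with h1 | h3
  · exact not_adj_of_mem_geomRealization hh h1 hn adj_inr_one_two
  · exact not_adj_of_mem_geomRealization hh (a := .inr 2) hn h3 adj_inr_two_three

theorem toBase_mem (hm : southMass h + northMass h < 1) :
    toBase h ∈ geomRealization (indComplex G) := by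
  classical
  obtain ⟨hnn, s, -, hs, -⟩ := id hh
  have hden : 0 < 1 - southMass h - northMass h := by linarith
  have hvan : ∀ v ∉ s.preimage (embed x) embed_injective.injOn, h (embed x v) = 0 :=
    fun v hv => hs _ (by simpa using hv)
  refine mem_geomRealization_indComplex_of_support (fun v => div_nonneg (hnn _) hden.le)
    (s.preimage (embed x) embed_injective.injOn) (fun v hv => by simp [toBase, hvan v hv]) ?_
    fun u v hu hv huv => ?_
  · have hcover : ∀ w ∉ (s.preimage (embed x) embed_injective.injOn).image (embed x) ∪
        {.inr 1, .inr 2, .inr 3}, h w = 0 := by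
      intro w hw
      rcases eq_embed_or_path w with ⟨v, rfl⟩ | rfl | rfl | rfl
      · exact hvan v fun hv => hw (mem_union_left _ (mem_image_of_mem _ hv))
      all_goals simp at hw
    have hsum := sum_eq_one_of_mem_geomRealization hh hcover
    rw [sum_image_embed_union] at hsum
    simp only [toBase, ← sum_div]
    rw [div_eq_one_iff_eq hden.ne', southMass, northMass]
    linarith
  · refine not_adj_of_mem_geomRealization hh (fun h0 => hu ?_) (fun h0 => hv ?_)
      (adj_embed_embed.2 huv) <;> simp [toBase, h0]

end masses

theorem height_eq_zero {h : {v : V // v ≠ x} ⊕ Fin 4 → ℝ}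
    (hh : 1 / 2 + northMass h - southMass h ≤ 0) : height h = 0 :=
  Set.projIcc_of_le_left _ hh

theorem height_eq_one {h : {v : V // v ≠ x} ⊕ Fin 4 → ℝ}
    (hh : 1 ≤ 1 / 2 + northMass h - southMass h) : height h = 1 :=
  Set.projIcc_of_right_le _ hh

theorem southMass_lt_northMass {h : {v : V // v ≠ x} ⊕ Fin 4 → ℝ}
    (hh : 1 / 2 < (height h : ℝ)) : southMass h < northMass h := by
  by_contra! hle
  have : (height h : ℝ) ≤ 1 / 2 :=
    max_le (by norm_num) ((min_le_right _ _).trans (by linarith))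
  linarith

theorem northMass_lt_southMass {h : {v : V // v ≠ x} ⊕ Fin 4 → ℝ}
    (hh : (height h : ℝ) < 1 / 2) : northMass h < southMass h := by
  by_contra! hle
  have : 1 / 2 ≤ (height h : ℝ) :=
    le_max_of_le_right (le_min (by norm_num) (by linarith))
  linarith

variable (G x) in
/-- `toBase` degenerates at the poles; collapsing whole neighbourhoods of them keeps this
continuous. -/
noncomputable def fromLozinFun (h : geomRealization (indComplex 𝓛)) :
    Susp (geomRealization (indComplex G)) :=
  if hs : 1 / 2 ≤ southMass h.1 then Susp.south
  else if hn : 1 / 2 ≤ northMass h.1 then Susp.north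
  else Susp.mk ⟨toBase h.1, toBase_mem h.2 (by linarith)⟩ (height h.1)

section fromLozinFun

variable {h : geomRealization (indComplex (lozin G x (G.neighborSet x) ∅))}

theorem fromLozinFun_of_southMass (hs : 1 / 2 ≤ southMass h.1) :
    fromLozinFun G x h = Susp.south :=
  dif_pos hs

theorem fromLozinFun_of_northMass (hn : 1 / 2 ≤ northMass h.1) :
    fromLozinFun G x h = Susp.north := by
  have hs : southMass h.1 = 0 := not_imp_comm.1 (northMass_eq_zero_of_southMass_ne_zero h.2)
    (by linarith)
  rw [fromLozinFun, dif_neg (by linarith), dif_pos hn]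

theorem fromLozinFun_eq_mk (hm : southMass h.1 + northMass h.1 < 1) :
    fromLozinFun G x h = Susp.mk ⟨toBase h.1, toBase_mem h.2 hm⟩ (height h.1) := by
  unfold fromLozinFun
  split_ifs with hs hn
  · rw [height_eq_zero, Susp.mk_zero]
    linarith [northMass_eq_zero_of_southMass_ne_zero h.2 (by linarith)]
  · have hs : southMass h.1 = 0 := not_imp_comm.1 (northMass_eq_zero_of_southMass_ne_zero h.2)
      (by linarith)
    rw [height_eq_one, Susp.mk_one]
    linarith
  · rfl

end fromLozinFun

theorem continuousOn_fromLozinFun :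
    ContinuousOn (fromLozinFun G x) {h | southMass h.1 + northMass h.1 < 1} := by
  rw [continuousOn_iff_continuous_domRestrict]
  have : Set.domRestrict {h | southMass h.1 + northMass h.1 < 1} (fromLozinFun G x) =
      fun h => Susp.mk ⟨toBase h.1.1, toBase_mem h.1.2 h.2⟩ (height h.1.1) :=
    funext fun h => fromLozinFun_eq_mk h.2
  rw [this]
  have hval : Continuous fun h : {h : geomRealization (indComplex 𝓛) //
      southMass h.1 + northMass h.1 < 1} => h.1.1 := by fun_prop
  refine .suspMk (.subtype_mk (continuous_pi fun v => ?_) _) (continuous_projIcc.comp ?_)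
  · refine ((continuous_apply _).comp hval).div (by fun_prop) fun h => ?_
    linarith [h.2]
  · fun_prop

theorem continuous_fromLozinFun : Continuous (fromLozinFun G x) := by
  have hs : Continuous fun h : geomRealization (indComplex 𝓛) => southMass h.1 := by fun_prop
  have hn : Continuous fun h : geomRealization (indComplex 𝓛) => northMass h.1 := by fun_prop
  refine continuous_iff_continuousAt.2 fun h₀ => ?_
  by_cases hs₀ : 1 / 2 < southMass h₀.1
  · exact continuousAt_const.congr <| (hs.continuousAt.eventually (lt_mem_nhds hs₀)).mono
      fun h hh => (fromLozinFun_of_southMass hh.le).symm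
  by_cases hn₀ : 1 / 2 < northMass h₀.1
  · exact continuousAt_const.congr <| (hn.continuousAt.eventually (lt_mem_nhds hn₀)).mono
      fun h hh => (fromLozinFun_of_northMass hh.le).symm
  have hm₀ : southMass h₀.1 + northMass h₀.1 < 1 := by
    rcases eq_or_ne (southMass h₀.1) 0 with h0 | h0
    · linarith
    · linarith [northMass_eq_zero_of_southMass_ne_zero h₀.2 h0]
  exact continuousOn_fromLozinFun.continuousAt
    ((isOpen_lt (hs.add hn) continuous_const).mem_nhds hm₀)

variable (G x) in
noncomputable def fromLozin :
    C(geomRealization (indComplex 𝓛), Susp (geomRealization (indComplex G))) :=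
  ⟨fromLozinFun G x, continuous_fromLozinFun⟩

theorem fromLozin_toLozin_mk (p : geomRealization (indComplex G)) {t : I} (h₀ : t ≠ 0)
    (h₁ : t ≠ 1) :
    fromLozin G x (toLozin G x (Susp.mk p t)) =
      Susp.mk p (Set.projIcc 0 1 zero_le_one (2 * t - 1 / 2)) := by
  have ht₀ : 0 < (t : ℝ) := lt_of_le_of_ne t.2.1 fun h => h₀ (Subtype.ext h.symm)
  have ht₁ : (t : ℝ) < 1 := lt_of_le_of_ne t.2.2 fun h => h₁ (Subtype.ext h)
  have hσ : |2 * (t : ℝ) - 1| < 1 := abs_lt.2 ⟨by linarith, by linarith⟩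
  have hs : southMass (suspVal x p t) = (2 * (t : ℝ) - 1)⁻ := by simp [southMass]
  have hn : northMass (suspVal x p t) = (2 * (t : ℝ) - 1)⁺ := rfl
  have hm : southMass (suspVal x p t) + northMass (suspVal x p t) < 1 := by
    rwa [hs, hn, add_comm, posPart_add_negPart]
  refine (fromLozinFun_eq_mk (h := toLozin G x (Susp.mk p t)) hm).trans ?_
  congr 1
  · ext v
    have : 1 - |2 * (t : ℝ) - 1| ≠ 0 := by linarith
    simp only [toBase, coe_toLozin_mk, suspVal_embed, hs, hn]
    rw [sub_sub, add_comm, posPart_add_negPart, mul_div_cancel_left₀ _ this]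
  · simp only [height, coe_toLozin_mk, northMass, southMass, suspVal_inr_one, suspVal_inr_two,
      suspVal_inr_three, zero_add]
    congr 1
    linarith [posPart_sub_negPart (2 * (t : ℝ) - 1)]

theorem fromLozin_comp_toLozin_homotopic :
    ((fromLozin G x).comp (toLozin G x)).Homotopic (.id _) := by
  refine Susp.homotopic_id_of_reparam _ (ρ := fun t => Set.projIcc 0 1 zero_le_one (2 * t - 1 / 2))
    (by fun_prop) ?_ ?_ ?_ ?_ fun p t h₀ h₁ => fromLozin_toLozin_mk p h₀ h₁
  · exact Set.projIcc_of_le_left _ (by norm_num)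
  · exact Set.projIcc_of_right_le _ (by norm_num)
  · exact fromLozinFun_of_southMass (by simp [toLozin, southMass]; norm_num)
  · exact fromLozinFun_of_northMass (by simp [toLozin, northMass]; norm_num)

theorem toLozin_fromLozin_ne_zero (h : geomRealization (indComplex 𝓛))
    {w : {v : V // v ≠ x} ⊕ Fin 4} (hw : (toLozin G x (fromLozin G x h) : _ → ℝ) w ≠ 0) :
    h.1 w ≠ 0 ∨ (w = .inr 3 ∧ h.1 (.inr 2) = 0) := by
  have hsnn := southMass_nonneg h.2
  have hnnn := northMass_nonneg h.2
  by_cases hs : 1 / 2 ≤ southMass h.1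
  · have hw3 : w = .inr 3 := by
      by_contra hne
      simp [fromLozin, fromLozinFun_of_southMass hs, toLozin, hne] at hw
    exact .inr ⟨hw3, northMass_eq_zero_of_southMass_ne_zero h.2 (by linarith)⟩
  by_cases hn : 1 / 2 ≤ northMass h.1
  · have hw2 : w = .inr 2 := by
      by_contra hne
      simp [fromLozin, fromLozinFun_of_northMass hn, toLozin, hne] at hw
    subst hw2
    exact .inl fun h0 => by norm_num [northMass, h0] at hn
  have hm : southMass h.1 + northMass h.1 < 1 := by linarith
  simp only [fromLozin, ContinuousMap.coe_mk, fromLozinFun_eq_mk hm, coe_toLozin_mk] at hw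
  rcases suspVal_ne_zero hw with ⟨v, hv, rfl⟩ | ⟨rfl, hpos⟩ | ⟨rfl, hneg⟩
  · exact .inl fun h0 => hv (by simp [toBase, h0])
  · exact .inl (hsnn.trans_lt (southMass_lt_northMass (by linarith))).ne'
  · exact .inr ⟨rfl, northMass_eq_zero_of_southMass_ne_zero h.2
      (hnnn.trans_lt (northMass_lt_southMass (by linarith))).ne'⟩

theorem toLozin_comp_fromLozin_homotopic :
    ((toLozin G x).comp (fromLozin G x)).Homotopic (.id _) := by
  refine homotopic_of_supports_independent _ _ fun h a b ha hb => ?_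
  replace ha := ha.elim (toLozin_fromLozin_ne_zero h) .inl
  replace hb := hb.elim (toLozin_fromLozin_ne_zero h) .inl
  rcases ha with ha | ⟨rfl, h2⟩ <;> rcases hb with hb | ⟨rfl, h2⟩
  · exact not_adj_of_mem_geomRealization h.2 ha hb
  · exact fun hab => ha (adj_inr_three_iff.1 hab ▸ h2)
  · exact fun hab => hb (adj_inr_three_iff.1 hab.symm ▸ h2)
  · exact SimpleGraph.irrefl _

end Lozin

/-- The independence complex of the Lozin transform `L_x(G; N_G(x), ∅)` is homotopy
equivalent to the unreduced suspension of the independence complex of `G`. -/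
theorem stmt_8 {V : Type*} (G : SimpleGraph V) (x : V) :
    Nonempty (ContinuousMap.HomotopyEquiv
      (geomRealization (indComplex (lozin G x (G.neighborSet x) ∅)))
      (Susp (geomRealization (indComplex G)))) :=
  ⟨{ toFun := Lozin.fromLozin G x
     invFun := Lozin.toLozin G x
     left_inv := Lozin.toLozin_comp_fromLozin_homotopic
     right_inv := Lozin.fromLozin_comp_toLozin_homotopic }⟩
end

section
/- Let G be a simple graph with a genuine pair {x,y} (non-adjacent, and no induced 2K₂ of G uses both x and y), and let g(G;xy) be the genuine contraction of G at {x,y}: delete x and y, add a new vertex w adjacent exactly to N_G(x) ∩ N_G(y). Then the independence complexes of g(G;xy) and of the edge contraction (Ind(G))_{xy} of the simplicial complex Ind(G) along the edge {x,y} are isomorphic as simplicial complexes. -/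
/-- The induced subgraph of `G` on the four distinct vertices `a,b,c,d` is isomorphic to
`2K₂`, with matching edges `ab` and `cd`. -/
def IsInduced2K2On {V : Type*} (G : SimpleGraph V) (a b c d : V) : Prop :=
  a ≠ b ∧ a ≠ c ∧ a ≠ d ∧ b ≠ c ∧ b ≠ d ∧ c ≠ d ∧
    G.Adj a b ∧ G.Adj c d ∧
    ¬ G.Adj a c ∧ ¬ G.Adj a d ∧ ¬ G.Adj b c ∧ ¬ G.Adj b d

/-- `{x,y}` is a genuine pair in `G`: non-adjacent distinct vertices such that no induced
`2K₂` of `G` uses both `x` and `y`. -/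
def IsGenuinePair {V : Type*} (G : SimpleGraph V) (x y : V) : Prop :=
  x ≠ y ∧ ¬ G.Adj x y ∧
    ¬ ∃ u v : V, u ∉ ({x, y} : Set V) ∧ v ∉ ({x, y} : Set V) ∧
      ∃ a b c d : V, ({a, b, c, d} : Set V) = {x, y, u, v} ∧ IsInduced2K2On G a b c d

/-- The genuine contraction `g(G;xy)`: delete `x` and `y` and add a new vertex `w = none`
adjacent exactly to the common neighbors of `x` and `y`. -/
def gContraction {V : Type*} (G : SimpleGraph V) (x y : V) :
    SimpleGraph (Option {u : V // u ≠ x ∧ u ≠ y}) :=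
  SimpleGraph.fromRel fun p q =>
    match p, q with
    | some u, some v => G.Adj u.1 v.1
    | some u, none => G.Adj x u.1 ∧ G.Adj y u.1
    | _, _ => False

/-- The vertex map `V → V(g(G;xy))` contracting `x` and `y` to the new vertex `none` and
fixing all other vertices. -/
def contractFun {V : Type*} [DecidableEq V] (x y : V) (v : V) :
    Option {u : V // u ≠ x ∧ u ≠ y} :=
  if h : v ≠ x ∧ v ≠ y then some ⟨v, h⟩ else none

/-!
Adjacency in `g(G;xy)` pulls back along `contractFun`, so the image of an independent set of
`G` is independent. Conversely, an independent set `t` of `g(G;xy)` containing `w` lifts to `G`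
by replacing `w` with `x` or with `y`, and one of the two choices works: if `x` had a neighbour
`u` and `y` a neighbour `v` in `t`, independence of `w` from `u` and `v` would put
`u ∈ N(x) \ N(y)` and `v ∈ N(y) \ N(x)`, so the genuine pair condition makes `u` and `v`
adjacent, contradicting independence of `t`.
-/

section

variable {V : Type*} {G : SimpleGraph V} {x y : V}

@[simp]
lemma gContraction_adj_some_some (u v : {u : V // u ≠ x ∧ u ≠ y}) :
    (gContraction G x y).Adj (some u) (some v) ↔ G.Adj u.1 v.1 := by
  simp only [gContraction, SimpleGraph.fromRel_adj, ne_eq, Option.some.injEq]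
  exact ⟨fun ⟨_, h⟩ => h.elim id G.adj_symm,
    fun h => ⟨fun e => G.ne_of_adj h (e ▸ rfl), .inl h⟩⟩

@[simp]
lemma gContraction_adj_some_none (u : {u : V // u ≠ x ∧ u ≠ y}) :
    (gContraction G x y).Adj (some u) none ↔ G.Adj x u.1 ∧ G.Adj y u.1 := by
  simp [gContraction]

@[simp]
lemma gContraction_adj_none_some (u : {u : V // u ≠ x ∧ u ≠ y}) :
    (gContraction G x y).Adj none (some u) ↔ G.Adj x u.1 ∧ G.Adj y u.1 := by
  rw [SimpleGraph.adj_comm, gContraction_adj_some_none]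

lemma IsGenuinePair.adj_of_mem_neighborSet_sdiff (h : IsGenuinePair G x y) {u v : V}
    (hu : u ∈ G.neighborSet x \ G.neighborSet y) (hv : v ∈ G.neighborSet y \ G.neighborSet x) :
    G.Adj u v := by
  obtain ⟨hxy, hnxy, h2K2⟩ := h
  obtain ⟨hxu, hyu⟩ := hu
  obtain ⟨hyv, hxv⟩ := hv
  simp only [SimpleGraph.mem_neighborSet] at hxu hyu hyv hxv
  have hux : u ≠ x := (G.ne_of_adj hxu).symm
  have huy : u ≠ y := fun e => hnxy (e ▸ hxu)
  have hvx : v ≠ x := fun e => hnxy (e ▸ hyv).symm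
  have hvy : v ≠ y := (G.ne_of_adj hyv).symm
  have huv : u ≠ v := fun e => hxv (e ▸ hxu)
  by_contra hnuv
  refine h2K2 ⟨u, v, by simp [hux, huy], by simp [hvx, hvy], x, u, y, v,
    by ext; simp; tauto, ?_⟩
  exact ⟨hux.symm, hxy, hvx.symm, huy, huv, hvy.symm, hxu, hyv, hnxy, hxv,
    fun h => hyu h.symm, hnuv⟩

lemma IsGenuinePair.exists_endpoint_not_adj (h : IsGenuinePair G x y)
    {t : Finset (Option {u : V // u ≠ x ∧ u ≠ y})}
    (ht : ∀ a ∈ t, ∀ b ∈ t, ¬ (gContraction G x y).Adj a b) :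
    ∃ z, (z = x ∨ z = y) ∧ (none ∈ t → ∀ u, some u ∈ t → ¬ G.Adj z u.1) := by
  by_contra! hz
  obtain ⟨hw, u, hu, hxu⟩ := hz x (.inl rfl)
  obtain ⟨-, v, hv, hyv⟩ := hz y (.inr rfl)
  have hyu : ¬ G.Adj y u.1 := fun hyu => ht _ hu _ hw (by simp [hxu, hyu])
  have hxv : ¬ G.Adj x v.1 := fun hxv => ht _ hv _ hw (by simp [hxv, hyv])
  exact ht _ hu _ hv (by simpa using h.adj_of_mem_neighborSet_sdiff ⟨hxu, hyu⟩ ⟨hyv, hxv⟩)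

variable [DecidableEq V]

lemma adj_of_gContraction_adj_contractFun {p q : V}
    (h : (gContraction G x y).Adj (contractFun x y p) (contractFun x y q)) : G.Adj p q := by
  unfold contractFun at h
  split_ifs at h with hp hq hq
  · simpa using h
  · obtain rfl | rfl := (or_iff_not_and_not.2 hq) <;> simp_all [G.adj_comm]
  · obtain rfl | rfl := (or_iff_not_and_not.2 hp) <;> simp_all
  · exact absurd h (gContraction G x y).irrefl

lemma contractFun_elim {z : V} (hz : z = x ∨ z = y)
    (o : Option {u : V // u ≠ x ∧ u ≠ y}) :
    contractFun x y (o.elim z Subtype.val) = o := by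
  rcases o with _ | ⟨u, hu⟩
  · obtain rfl | rfl := hz <;> simp [contractFun]
  · simp [contractFun, hu]

lemma exists_indep_image_contractFun_eq_of_not_adj {z : V} (hz : z = x ∨ z = y)
    {t : Finset (Option {u : V // u ≠ x ∧ u ≠ y})}
    (ht : ∀ a ∈ t, ∀ b ∈ t, ¬ (gContraction G x y).Adj a b)
    (hzt : none ∈ t → ∀ u, some u ∈ t → ¬ G.Adj z u.1) :
    ∃ s : Finset V, (∀ a ∈ s, ∀ b ∈ s, ¬ G.Adj a b) ∧ t = s.image (contractFun x y) := by
  refine ⟨t.image (·.elim z Subtype.val), ?_, ?_⟩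
  · simp only [Finset.forall_mem_image]
    rintro (_ | u) hu (_ | v) hv
    · exact G.irrefl
    · exact hzt hu v hv
    · exact fun huz => hzt hv u hu huz.symm
    · exact fun huv => ht _ hu _ hv (by simpa using huv)
  · simp [Finset.image_image, Function.comp_def, contractFun_elim hz]

lemma IsGenuinePair.exists_indep_image_contractFun_eq (h : IsGenuinePair G x y)
    {t : Finset (Option {u : V // u ≠ x ∧ u ≠ y})}
    (ht : ∀ a ∈ t, ∀ b ∈ t, ¬ (gContraction G x y).Adj a b) :
    ∃ s : Finset V, (∀ a ∈ s, ∀ b ∈ s, ¬ G.Adj a b) ∧ t = s.image (contractFun x y) :=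
  let ⟨_, hz, hzt⟩ := h.exists_endpoint_not_adj ht
  exists_indep_image_contractFun_eq_of_not_adj hz ht hzt

end

/-- If `{x,y}` is a genuine pair of `G`, then the independence complex of the genuine
contraction `g(G;xy)` coincides (as a simplicial complex, i.e. face-by-face under the
canonical identification of vertices) with the edge contraction of `Ind(G)` along
`{x,y}` — whose faces are the images of the independent sets of `G` under `contractFun`. -/
theorem stmt_14 {V : Type*} [DecidableEq V] (G : SimpleGraph V) (x y : V)
    (h : IsGenuinePair G x y) :
    {t : Finset (Option {u : V // u ≠ x ∧ u ≠ y}) |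
        ∀ a ∈ t, ∀ b ∈ t, ¬ (gContraction G x y).Adj a b} =
      {t : Finset (Option {u : V // u ≠ x ∧ u ≠ y}) |
        ∃ s : Finset V, (∀ a ∈ s, ∀ b ∈ s, ¬ G.Adj a b) ∧
          t = s.image (contractFun x y)} := by
  ext t
  refine ⟨h.exists_indep_image_contractFun_eq, ?_⟩
  rintro ⟨s, hs, rfl⟩
  simp only [Set.mem_ofPred_eq, Finset.forall_mem_image]
  exact fun p hp q hq hpq => hs p hp q hq (adj_of_gContraction_adj_contractFun hpq)
end

section
/- Let M = {u₁v₁, …, u_kv_k} be a maximum induced matching in a claw-free simple graph G, let U = {u₁,…,u_k}, and let H = G − N_G[U]. Then for each i, the set K_i = N_H(v_i) (neighbors in H of v_i) is a clique of H. -/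
/-- A graph is claw-free if it has no induced subgraph isomorphic to `K_{1,3}`. -/
def ClawFree {V : Type*} (G : SimpleGraph V) : Prop :=
  ¬ ∃ a b c d : V, G.Adj a b ∧ G.Adj a c ∧ G.Adj a d ∧
      ¬ G.Adj b c ∧ ¬ G.Adj b d ∧ ¬ G.Adj c d ∧ b ≠ c ∧ b ≠ d ∧ c ≠ d

/-- Let `M = {u₁v₁, …, u_kv_k}` be a maximum induced matching in a claw-free graph `G`,
`U = {u₁,…,u_k}` and `H = G − N_G[U]`.  Then for each `i`, the set `K_i = N_H(v_i)` of
vertices of `H` adjacent (in `G`) to `v_i` is a clique of `H`. -/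
theorem stmt_15 {V : Type*} [Fintype V] (G : SimpleGraph V) (hclaw : ClawFree G)
    (k : ℕ) (u v : Fin k → V) (M : G.Subgraph)
    (hmatch : M.IsMatching)
    (hind : ∀ ⦃a b : V⦄, a ∈ M.verts → b ∈ M.verts → G.Adj a b → M.Adj a b)
    (hmax : ∀ M' : G.Subgraph, M'.IsMatching →
      (∀ ⦃a b : V⦄, a ∈ M'.verts → b ∈ M'.verts → G.Adj a b → M'.Adj a b) →
      M'.edgeSet.ncard ≤ M.edgeSet.ncard)
    (hedges : ∀ i, M.Adj (u i) (v i))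
    (hverts : M.verts = Set.range u ∪ Set.range v) (i : Fin k) :
    ∀ w z : V,
      w ∉ (⋃ j, insert (u j) (G.neighborSet (u j))) →
      z ∉ (⋃ j, insert (u j) (G.neighborSet (u j))) →
      G.Adj (v i) w → G.Adj (v i) z → w ≠ z → G.Adj w z := by
  intro w z hw hz hvw hvz hwz
  by_contra hadj
  have hw' := fun h => hw (Set.mem_iUnion.2 ⟨i, h⟩)
  have hz' := fun h => hz (Set.mem_iUnion.2 ⟨i, h⟩)
  simp only [Set.mem_insert_iff, SimpleGraph.mem_neighborSet, not_or] at hw' hz'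
  have huw : ¬ G.Adj (u i) w := fun h => hw' (Or.inr h)
  have huz : ¬ G.Adj (u i) z := fun h => hz' (Or.inr h)
  have hwne : u i ≠ w := fun h => hw' (Or.inl h.symm)
  have hzne : u i ≠ z := fun h => hz' (Or.inl h.symm)
  exact hclaw ⟨v i, u i, w, z, (hedges i).adj_sub.symm, hvw, hvz,
    huw, huz, hadj, hwne, hzne, hwz⟩
end

section
/- Let G be a (C₃, P₅)-free simple graph (no induced triangle and no induced path on 5 vertices) containing an induced 5-cycle C on vertices x₁,…,x₅, such that every vertex of V(G) \ V(C) has at most one neighbor on C, and such that no vertex of G is dominated (for all distinct u,v, N_G(u) ⊄ N_G(v)). Then G does not contain a vertex y ∉ V(C) with exactly one neighbor on C. -/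
/-- A graph is `P₅`-free if it contains no induced path on five vertices. -/
def P5Free {V : Type*} (G : SimpleGraph V) : Prop :=
  ¬ ∃ p : Fin 5 → V, Function.Injective p ∧
      ∀ i j : Fin 5, G.Adj (p i) (p j) ↔ ((i : ℕ) + 1 = j ∨ (j : ℕ) + 1 = i)

/-- A graph is `C₃`-free (triangle-free). -/
def TriangleFree {V : Type*} (G : SimpleGraph V) : Prop :=
  ∀ a b c : V, ¬ (G.Adj a b ∧ G.Adj b c ∧ G.Adj a c)

lemma path5_aux {V : Type*} {G : SimpleGraph V} (hP5 : P5Free G) (a b c d e : V)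
    (hab : G.Adj a b) (hbc : G.Adj b c) (hcd : G.Adj c d) (hde : G.Adj d e)
    (hac : ¬ G.Adj a c) (had : ¬ G.Adj a d) (hae : ¬ G.Adj a e)
    (hbd : ¬ G.Adj b d) (hbe : ¬ G.Adj b e) (hce : ¬ G.Adj c e) : False := by
  have nac : a ≠ c := fun h => had (h ▸ hcd)
  have nad : a ≠ d := fun h => hae (h ▸ hde)
  have nae : a ≠ e := fun h => had (h ▸ hde.symm)
  have nbd : b ≠ d := fun h => hbe (h ▸ hde)
  have nbe : b ≠ e := fun h => hce ((h ▸ hbc).symm)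
  have nce : c ≠ e := fun h => hbe (h ▸ hbc)
  have hca : ¬ G.Adj c a := fun h => hac h.symm
  have hda : ¬ G.Adj d a := fun h => had h.symm
  have hea : ¬ G.Adj e a := fun h => hae h.symm
  have hdb : ¬ G.Adj d b := fun h => hbd h.symm
  have heb : ¬ G.Adj e b := fun h => hbe h.symm
  have hec : ¬ G.Adj e c := fun h => hce h.symm
  apply hP5
  refine ⟨![a,b,c,d,e], ?_, ?_⟩
  · intro i j hij
    fin_cases i <;> fin_cases j <;>
      simp_all [hab.ne, hbc.ne, hcd.ne, hde.ne, hab.ne', hbc.ne', hcd.ne', hde.ne',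
        nac, nad, nae, nbd, nbe, nce, nac.symm, nad.symm, nae.symm, nbd.symm, nbe.symm, nce.symm]
  · intro i j
    fin_cases i <;> fin_cases j <;>
      simp [hab, hbc, hcd, hde, hab.symm, hbc.symm, hcd.symm, hde.symm,
        hac, had, hae, hbd, hbe, hce, hca, hda, hea, hdb, heb, hec, G.irrefl]

lemma zm_aux (i : ZMod 5) {a b : ZMod 5} (h : a ≠ b) : i + a ≠ i + b :=
  fun h' => h (add_left_cancel h')

lemma zm0_aux (i : ZMod 5) {b : ZMod 5} (h : b ≠ 0) : i ≠ i + b := by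
  intro h'
  apply h
  have h2 : i + b = i + 0 := by rw [add_zero]; exact h'.symm
  exact add_left_cancel h2

/-- Let `G` be a `(C₃,P₅)`-free graph with an induced five-cycle `C` (vertices `x i`,
`i ∈ ZMod 5`), such that every vertex outside `C` has at most one neighbor on `C` and no
vertex's open neighborhood is contained in another's.  Then `G` has no vertex outside `C`
with exactly one neighbor on `C`. -/
theorem stmt_16 {V : Type*} (G : SimpleGraph V)
    (hC3 : TriangleFree G) (hP5 : P5Free G)
    (x : ZMod 5 → V) (hinj : Function.Injective x)
    (hcyc : ∀ i j : ZMod 5, G.Adj (x i) (x j) ↔ (j = i + 1 ∨ i = j + 1))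
    (hone : ∀ v : V, v ∉ Set.range x →
      ∀ i j : ZMod 5, G.Adj v (x i) → G.Adj v (x j) → i = j)
    (hdom : ∀ u v : V, u ≠ v → ¬ G.neighborSet u ⊆ G.neighborSet v) :
    ¬ ∃ y : V, y ∉ Set.range x ∧ ∃! i : ZMod 5, G.Adj y (x i) := by
  rintro ⟨y, hy, hex⟩
  obtain ⟨i₀, hadj, huniq⟩ := hex
  have hyne : y ≠ x (i₀ + 1) := fun h => hy ⟨i₀ + 1, h.symm⟩
  obtain ⟨z, hz1, hz2⟩ := Set.not_subset.mp (hdom y (x (i₀ + 1)) hyne)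
  have hyz : G.Adj y z := hz1
  have hz1' : ¬ G.Adj z (x (i₀ + 1)) := fun h => hz2 h.symm
  have hzrange : z ∉ Set.range x := by
    rintro ⟨j, rfl⟩
    have hj := huniq j hyz
    apply hz2
    show G.Adj (x (i₀ + 1)) (x j)
    rw [hj]
    exact (hcyc (i₀ + 1) i₀).mpr (Or.inr rfl)
  have hzx0 : ¬ G.Adj z (x i₀) := fun h => hC3 y z (x i₀) ⟨hyz, h, hadj⟩
  -- y's nonadjacencies
  have hy1 : ¬ G.Adj y (x (i₀ + 1)) := fun h => (zm0_aux i₀ (by decide : (1:ZMod 5) ≠ 0)) (huniq _ h).symm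
  have hy2 : ¬ G.Adj y (x (i₀ + 2)) := fun h => (zm0_aux i₀ (by decide : (2:ZMod 5) ≠ 0)) (huniq _ h).symm
  have hy3 : ¬ G.Adj y (x (i₀ + 3)) := fun h => (zm0_aux i₀ (by decide : (3:ZMod 5) ≠ 0)) (huniq _ h).symm
  have hy4 : ¬ G.Adj y (x (i₀ + 4)) := fun h => (zm0_aux i₀ (by decide : (4:ZMod 5) ≠ 0)) (huniq _ h).symm
  -- cycle nonadjacencies
  have hc02 : ¬ G.Adj (x i₀) (x (i₀ + 2)) := by
    intro h
    rcases (hcyc _ _).mp h with h' | h'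
    · exact zm_aux i₀ (by decide : (2:ZMod 5) ≠ 1) h'
    · rw [add_assoc] at h'
      exact zm0_aux i₀ (by decide : (2+1:ZMod 5) ≠ 0) h'
  have hc03 : ¬ G.Adj (x i₀) (x (i₀ + 3)) := by
    intro h
    rcases (hcyc _ _).mp h with h' | h'
    · exact zm_aux i₀ (by decide : (3:ZMod 5) ≠ 1) h'
    · rw [add_assoc] at h'
      exact zm0_aux i₀ (by decide : (3+1:ZMod 5) ≠ 0) h'
  by_cases hz22 : G.Adj z (x (i₀ + 2))
  · -- z adjacent to x(i₀+2): use path z, y, x i₀, x(i₀+4), x(i₀+3)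
    have huz : ∀ j, G.Adj z (x j) → j = i₀ + 2 := fun j h => hone z hzrange j (i₀ + 2) h hz22
    have hz4 : ¬ G.Adj z (x (i₀ + 4)) := fun h =>
      zm_aux i₀ (by decide : (4:ZMod 5) ≠ 2) (huz _ h)
    have hz3 : ¬ G.Adj z (x (i₀ + 3)) := fun h =>
      zm_aux i₀ (by decide : (3:ZMod 5) ≠ 2) (huz _ h)
    have hcd : G.Adj (x i₀) (x (i₀ + 4)) := by
      refine (hcyc _ _).mpr (Or.inr ?_)
      rw [add_assoc, (by decide : (4+1:ZMod 5) = 0), add_zero]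
    have hde : G.Adj (x (i₀ + 4)) (x (i₀ + 3)) := by
      refine (hcyc _ _).mpr (Or.inr ?_)
      rw [add_assoc, (by decide : (3+1:ZMod 5) = 4)]
    exact path5_aux hP5 z y (x i₀) (x (i₀ + 4)) (x (i₀ + 3)) hyz.symm hadj hcd hde
      hzx0 hz4 hz3 hy4 hy3 hc03
  · -- z not adjacent to x(i₀+2): use path z, y, x i₀, x(i₀+1), x(i₀+2)
    have hcd : G.Adj (x i₀) (x (i₀ + 1)) := (hcyc _ _).mpr (Or.inl rfl)
    have hde : G.Adj (x (i₀ + 1)) (x (i₀ + 2)) := by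
      refine (hcyc _ _).mpr (Or.inl ?_)
      rw [add_assoc, (by decide : (1+1:ZMod 5) = 2)]
    exact path5_aux hP5 z y (x i₀) (x (i₀ + 1)) (x (i₀ + 2)) hyz.symm hadj hcd hde
      hzx0 hz1' hz22 hy1 hy2 hc02
end

section
/- Let Δ be a finite simplicial complex over a field k, x a vertex of Δ, and define reg_k(Δ) = max{ j : H̃_{j−1}(Δ[S]; k) ≠ 0 for some S ⊆ V(Δ) }, where Δ[S] is the induced subcomplex on S. Then reg_k(Δ) ≤ max{ reg_k(del_Δ(x)), reg_k(lk_Δ(x)) + 1 }. -/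
variable {V : Type*}

/-- The induced subcomplex `Δ[S]` on a set `S` of vertices. -/
def SComplex.restrict (K : SComplex V) (S : Set V) : SComplex V where
  faces := {s | s ∈ K.faces ∧ ↑s ⊆ S}
  down_closed := fun _ _ hs hts =>
    ⟨K.down_closed hs.1 hts, subset_trans (Finset.coe_subset.2 hts) hs.2⟩

/-- The deletion `del_Δ(x)`: faces of `Δ` not containing `x`. -/
def SComplex.deletion (K : SComplex V) (x : V) : SComplex V where
  faces := {s | s ∈ K.faces ∧ x ∉ s}
  down_closed := fun _ _ hs hts => ⟨K.down_closed hs.1 hts, fun hx => hs.2 (hts hx)⟩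

/-- The link `lk_Δ(x)`: faces `F` of `Δ` with `x ∉ F` and `F ∪ {x} ∈ Δ`. -/
def SComplex.link [DecidableEq V] (K : SComplex V) (x : V) : SComplex V where
  faces := {s | s ∈ K.faces ∧ x ∉ s ∧ insert x s ∈ K.faces}
  down_closed := fun _ _ hs hts =>
    ⟨K.down_closed hs.1 hts, fun hx => hs.2.1 (hts hx),
      K.down_closed hs.2.2 (Finset.insert_subset_insert x hts)⟩

/-- Simplicial `m`-chains (spanned by the faces of cardinality `m`) with coefficients in
`k`.  The chains of cardinality `m` sit in homological degree `m - 1`; in particular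
cardinality `0` (the empty face) gives the augmentation, so the resulting homology is
reduced homology. -/
abbrev SComplex.chains (K : SComplex V) (k : Type*) [Field k] (m : ℕ) :=
  {s : Finset V // s ∈ K.faces ∧ s.card = m} → k

open Classical in
/-- The simplicial boundary map, expressed dually on coordinates: the coefficient of a face
`τ` of cardinality `m` in the boundary of a chain `c` is
`∑_{v ∉ τ, insert v τ ∈ K} (-1)^{|{w ∈ τ : w < v}|} · c (insert v τ)`. -/
noncomputable def SComplex.boundary [Fintype V] [LinearOrder V] (K : SComplex V)
    (k : Type*) [Field k] (m : ℕ) :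
    K.chains k (m + 1) →ₗ[k] K.chains k m :=
  LinearMap.pi fun τ =>
    ∑ v : V,
      if h : v ∉ τ.1 ∧ insert v τ.1 ∈ K.faces then
        ((-1 : k) ^ ((τ.1.filter fun w => w < v).card)) •
          LinearMap.proj (⟨insert v τ.1, h.2, by
            rw [Finset.card_insert_of_notMem h.1, τ.2.2]⟩ :
            {s : Finset V // s ∈ K.faces ∧ s.card = m + 1})
      else 0

/-- The cycles in cardinality `m`: the kernel of the boundary map (everything in
cardinality `0`, where there is no boundary map below). -/
noncomputable def SComplex.cycles [Fintype V] [LinearOrder V] (K : SComplex V)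
    (k : Type*) [Field k] : (m : ℕ) → Submodule k (K.chains k m)
  | 0 => ⊤
  | (m + 1) => LinearMap.ker (K.boundary k m)

/-- The reduced simplicial homology `H̃_{m-1}(K; k)`, computed at the chains spanned by
faces of cardinality `m` (so `m = 0` corresponds to `H̃_{-1}`): cycles modulo boundaries. -/
noncomputable def SComplex.redHomology [Fintype V] [LinearOrder V] (K : SComplex V)
    (k : Type*) [Field k] (m : ℕ) : Type _ :=
  ↥(K.cycles k m) ⧸
    Submodule.comap (K.cycles k m).subtype (LinearMap.range (K.boundary k m))

/-- The Castelnuovo–Mumford regularity of `Δ` over `k`: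
`reg_k(Δ) = max{ j : H̃_{j-1}(Δ[S]; k) ≠ 0 for some S ⊆ V }`. -/
noncomputable def SComplex.reg [Fintype V] [LinearOrder V] (K : SComplex V)
    (k : Type*) [Field k] : ℕ :=
  sSup {j : ℕ | ∃ S : Set V, Nontrivial ((K.restrict S).redHomology k j)}

open Finset

namespace FullSimplex

variable [LinearOrder V] (k : Type*) [CommRing k]

def sign (τ : Finset V) (v : V) : k := (-1) ^ (τ.filter (· < v)).card

variable {k}

theorem sign_mul_self (τ : Finset V) (v : V) : sign k τ v * sign k τ v = 1 := by
  rw [sign, ← pow_add]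
  exact Even.neg_one_pow ⟨_, rfl⟩

theorem sign_insert {u : V} (v : V) {τ : Finset V} (hu : u ∉ τ) :
    sign k (insert u τ) v = (if u < v then -1 else 1) * sign k τ v := by
  rw [sign, sign, filter_insert]
  split_ifs with h
  · rw [card_insert_of_notMem fun hc => hu (mem_of_mem_filter u hc), pow_succ, mul_comm]
  · rw [one_mul]

theorem sign_mul_sign_insert_antisymm {u v : V} {τ : Finset V} (huv : u ≠ v) (hu : u ∉ τ)
    (hv : v ∉ τ) : sign k τ u * sign k (insert u τ) v = -(sign k τ v * sign k (insert v τ) u) := by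
  rw [sign_insert v hu, sign_insert u hv]
  rcases huv.lt_or_gt with h | h
  · rw [if_pos h, if_neg h.asymm]; ring
  · rw [if_neg h.asymm, if_pos h]; ring

variable (k)

def contract (x : V) : (Finset V → k) →ₗ[k] (Finset V → k) :=
  LinearMap.pi fun G => if x ∈ G then 0 else sign k G x • LinearMap.proj (insert x G)

def cone (x : V) : (Finset V → k) →ₗ[k] (Finset V → k) :=
  LinearMap.pi fun F => if x ∈ F then sign k (F.erase x) x • LinearMap.proj (F.erase x) else 0

variable {k}

theorem contract_apply (x : V) (f : Finset V → k) (G : Finset V) :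
    contract k x f G = if x ∈ G then 0 else sign k G x * f (insert x G) := by
  simp only [contract, LinearMap.pi_apply]
  split_ifs <;> simp

theorem cone_apply (x : V) (f : Finset V → k) (F : Finset V) :
    cone k x f F = if x ∈ F then sign k (F.erase x) x * f (F.erase x) else 0 := by
  simp only [cone, LinearMap.pi_apply]
  split_ifs <;> simp

theorem contract_cone {x : V} {f : Finset V → k} (hf : ∀ G, x ∈ G → f G = 0) :
    contract k x (cone k x f) = f := by
  funext G
  rw [contract_apply, cone_apply, if_pos (mem_insert_self x G)]
  split_ifs with hx
  · exact (hf G hx).symm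
  · rw [erase_insert hx, ← mul_assoc, sign_mul_self, one_mul]

theorem apply_eq_zero_of_contract_eq_zero {x : V} {f : Finset V → k} (h : contract k x f = 0)
    {F : Finset V} (hF : x ∈ F) : f F = 0 := by
  have := congrFun h (F.erase x)
  rw [contract_apply, if_neg (notMem_erase x F), insert_erase hF, Pi.zero_apply] at this
  rw [← one_mul (f F), ← sign_mul_self (F.erase x) x, mul_assoc, this, mul_zero]

variable [Fintype V] (k)

def boundary : (Finset V → k) →ₗ[k] (Finset V → k) :=
  LinearMap.pi fun τ => ∑ v ∈ τᶜ, sign k τ v • LinearMap.proj (insert v τ)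

variable {k}

theorem boundary_apply (f : Finset V → k) (τ : Finset V) :
    boundary k f τ = ∑ v ∈ τᶜ, sign k τ v * f (insert v τ) := by
  simp [boundary]

theorem boundary_boundary (f : Finset V → k) : boundary k (boundary k f) = 0 := by
  funext τ
  simp only [boundary_apply, compl_insert, mul_sum, Pi.zero_apply]
  rw [sum_sigma']
  refine sum_involution (fun p _ => ⟨p.2, p.1⟩) ?_ ?_ ?_ fun _ _ => rfl
  · rintro ⟨v, u⟩ hp
    simp only [mem_sigma, mem_compl, mem_erase] at hp
    rw [insert_comm, ← mul_assoc, ← mul_assoc,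
      sign_mul_sign_insert_antisymm hp.2.1.symm hp.1 hp.2.2, neg_mul, neg_add_cancel]
  · rintro ⟨v, u⟩ hp _ h
    simp only [mem_sigma, mem_erase] at hp
    exact hp.2.1 (congrArg Sigma.fst h)
  · rintro ⟨v, u⟩ hp
    simp only [mem_sigma, mem_compl, mem_erase] at hp ⊢
    exact ⟨hp.2.2, hp.2.1.symm, hp.1⟩

theorem contract_boundary (x : V) (f : Finset V → k) :
    contract k x (boundary k f) = -boundary k (contract k x f) := by
  funext G
  simp only [contract_apply, boundary_apply, Pi.neg_apply]
  split_ifs with hx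
  · simp [hx]
  rw [← add_sum_erase _ _ (mem_compl.2 hx), if_pos (mem_insert_self x G), mul_zero, zero_add,
    compl_insert, mul_sum, ← sum_neg_distrib]
  refine sum_congr rfl fun v hv => ?_
  obtain ⟨hvx, hvG⟩ : v ≠ x ∧ v ∉ G := by simpa using hv
  rw [if_neg (by simp [Ne.symm hvx, hx]), insert_comm, ← mul_assoc, ← mul_assoc,
    sign_mul_sign_insert_antisymm (Ne.symm hvx) hx hvG, neg_mul]

end FullSimplex

namespace SComplex

open FullSimplex

@[ext]
theorem ext {K L : SComplex V} (h : K.faces = L.faces) : K = L := by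
  cases K; cases L; cases h; rfl

theorem restrict_deletion (K : SComplex V) (S : Set V) (x : V) :
    (K.restrict S).deletion x = (K.deletion x).restrict S :=
  ext <| Set.ext fun _ => and_right_comm

theorem restrict_link [DecidableEq V] (K : SComplex V) {S : Set V} {x : V} (hx : x ∈ S) :
    (K.restrict S).link x = (K.link x).restrict S := by
  ext s
  simp only [restrict, link, Set.mem_ofPred_eq, Finset.coe_insert, Set.insert_subset_iff, hx]
  tauto

theorem restrict_eq_deletion_restrict (K : SComplex V) {S : Set V} {x : V} (hx : x ∉ S) :
    K.restrict S = (K.deletion x).restrict S :=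
  ext <| Set.ext fun _ => ⟨fun h => ⟨⟨h.1, fun hs => hx (h.2 hs)⟩, h.2⟩, fun h => ⟨h.1.1, h.2⟩⟩

section

variable {k : Type*} [CommRing k]

variable (k) in
def supportedChains (K : SComplex V) (m : ℕ) : Submodule k (Finset V → k) where
  carrier := {f | ∀ s, f s ≠ 0 → s ∈ K.faces ∧ s.card = m}
  add_mem' {f g} hf hg s hs := by
    by_cases h : f s = 0
    · exact hg s (by simpa [h] using hs)
    · exact hf s h
  zero_mem' _ h := absurd rfl h
  smul_mem' c f hf s hs := hf s (right_ne_zero_of_mul hs)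

theorem supportedChains_deletion_le (K : SComplex V) (x : V) (m : ℕ) :
    (K.deletion x).supportedChains k m ≤ K.supportedChains k m :=
  fun _ hf s hs => ⟨(hf s hs).1.1, (hf s hs).2⟩

theorem mem_supportedChains_deletion {K : SComplex V} {m : ℕ} {f : Finset V → k} {x : V}
    (hf : f ∈ K.supportedChains k m) (hx : ∀ F, x ∈ F → f F = 0) :
    f ∈ (K.deletion x).supportedChains k m :=
  fun s hs => ⟨⟨(hf s hs).1, fun h => hs (hx s h)⟩, (hf s hs).2⟩

section

variable [LinearOrder V] {K : SComplex V} {m : ℕ} {f : Finset V → k}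

theorem mem_link_of_contract_apply_ne_zero {x : V} (hf : f ∈ K.supportedChains k m)
    {G : Finset V} (h : contract k x f G ≠ 0) : G ∈ (K.link x).faces ∧ G.card + 1 = m := by
  rw [contract_apply] at h
  split_ifs at h with hx
  · exact absurd rfl h
  obtain ⟨hK, hcard⟩ := hf _ (right_ne_zero_of_mul h)
  exact ⟨⟨K.down_closed hK (subset_insert x G), hx, hK⟩, card_insert_of_notMem hx ▸ hcard⟩

theorem cone_mem_supportedChains {x : V} (hf : f ∈ (K.link x).supportedChains k m) :
    cone k x f ∈ K.supportedChains k (m + 1) := by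
  intro F hF
  rw [cone_apply] at hF
  split_ifs at hF with hx
  · obtain ⟨⟨-, -, hK⟩, hcard⟩ := hf _ (right_ne_zero_of_mul hF)
    rw [insert_erase hx] at hK
    exact ⟨hK, by rw [← hcard, card_erase_add_one hx]⟩
  · exact absurd rfl hF

variable [Fintype V]

theorem mem_of_boundary_apply_ne_zero (hf : f ∈ K.supportedChains k m) {τ : Finset V}
    (h : FullSimplex.boundary k f τ ≠ 0) : τ ∈ K.faces ∧ τ.card + 1 = m := by
  rw [boundary_apply] at h
  obtain ⟨v, hv, hfv⟩ := exists_ne_zero_of_sum_ne_zero h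
  obtain ⟨hK, hcard⟩ := hf _ (right_ne_zero_of_mul hfv)
  rw [card_insert_of_notMem (mem_compl.1 hv)] at hcard
  exact ⟨K.down_closed hK (subset_insert v τ), hcard⟩

theorem boundary_mem_supportedChains (hf : f ∈ K.supportedChains k (m + 1)) :
    FullSimplex.boundary k f ∈ K.supportedChains k m := fun _ h =>
  (mem_of_boundary_apply_ne_zero hf h).imp_right Nat.add_right_cancel

theorem boundary_eq_zero_of_mem_supportedChains_zero (hf : f ∈ K.supportedChains k 0) :
    FullSimplex.boundary k f = 0 :=
  funext fun _ => by_contra fun h => Nat.succ_ne_zero _ (mem_of_boundary_apply_ne_zero hf h).2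

variable (k) in
/-- `H̃_{m-1}(K; k) = 0`, see `nontrivial_redHomology_iff`. -/
def IsAcyclicAt (K : SComplex V) (m : ℕ) : Prop :=
  ∀ f ∈ K.supportedChains k m, FullSimplex.boundary k f = 0 →
    ∃ g ∈ K.supportedChains k (m + 1), FullSimplex.boundary k g = f

theorem isAcyclicAt_of_deletion_of_link {K : SComplex V} {x : V} {j : ℕ}
    (hdel : (K.deletion x).IsAcyclicAt k j) (hlk : ∀ i, j = i + 1 → (K.link x).IsAcyclicAt k i) :
    K.IsAcyclicAt k j := by
  intro z hz hbz
  obtain ⟨w, hw, hbw⟩ : ∃ w ∈ (K.link x).supportedChains k j,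
      FullSimplex.boundary k w = contract k x z := by
    rcases j with _ | i
    · refine ⟨0, zero_mem _, (map_zero _).trans (funext fun G => ?_).symm⟩
      by_contra h
      exact Nat.succ_ne_zero _ (mem_link_of_contract_apply_ne_zero hz h).2
    · refine hlk i rfl _ (fun G h => (mem_link_of_contract_apply_ne_zero hz h).imp_right
        Nat.add_right_cancel) ?_
      rw [← neg_eq_zero, ← contract_boundary, hbz, map_zero]
  have hwx : ∀ G, x ∈ G → w G = 0 := fun G hG => by_contra fun h => (hw G h).1.2.1 hG
  set u := z + FullSimplex.boundary k (cone k x w)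
  have hu : u ∈ K.supportedChains k j :=
    add_mem hz (boundary_mem_supportedChains (cone_mem_supportedChains hw))
  have hcu : contract k x u = 0 := by
    rw [map_add, contract_boundary, contract_cone hwx, hbw, add_neg_cancel]
  obtain ⟨d, hd, hbd⟩ := hdel u
    (mem_supportedChains_deletion hu fun F => apply_eq_zero_of_contract_eq_zero hcu)
    (by rw [map_add, hbz, boundary_boundary, add_zero])
  exact ⟨d - cone k x w, sub_mem (supportedChains_deletion_le K x _ hd)
    (cone_mem_supportedChains hw), by rw [map_sub, hbd, add_sub_cancel_right]⟩

end

end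

section

variable {k : Type*} [Field k]

variable (k) in
noncomputable def extendByZero (K : SComplex V) (m : ℕ) : K.chains k m →ₗ[k] (Finset V → k) :=
  Function.ExtendByZero.linearMap k Subtype.val

section extendByZero

variable {K : SComplex V} {m : ℕ}

theorem extendByZero_apply_val (z : K.chains k m) (s : {s // s ∈ K.faces ∧ s.card = m}) :
    K.extendByZero k m z s = z s :=
  Subtype.val_injective.extend_apply z 0 s

theorem extendByZero_apply_of_notMem (z : K.chains k m) {s : Finset V}
    (hs : ¬(s ∈ K.faces ∧ s.card = m)) : K.extendByZero k m z s = 0 :=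
  Function.extend_apply' _ _ _ fun ⟨t, ht⟩ => hs (ht ▸ t.2)

theorem extendByZero_injective : Function.Injective (K.extendByZero k m) :=
  Function.extend_injective Subtype.val_injective (0 : Finset V → k)

theorem range_extendByZero : LinearMap.range (K.extendByZero k m) = K.supportedChains k m := by
  ext f
  refine ⟨?_, fun hf => ⟨fun s => f s, funext fun s => ?_⟩⟩
  · rintro ⟨z, rfl⟩ s hs
    by_contra h
    exact hs (extendByZero_apply_of_notMem z h)
  · by_cases h : s ∈ K.faces ∧ s.card = m
    · exact extendByZero_apply_val _ ⟨s, h⟩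
    · rw [extendByZero_apply_of_notMem _ h]
      by_contra hs
      exact h (hf s (Ne.symm hs))

theorem extendByZero_mem_supportedChains (z : K.chains k m) :
    K.extendByZero k m z ∈ K.supportedChains k m :=
  range_extendByZero (k := k) ▸ LinearMap.mem_range_self _ z

end extendByZero

variable [LinearOrder V] [Fintype V]

theorem boundary_apply (K : SComplex V) (m : ℕ) (z : K.chains k (m + 1))
    (τ : {s // s ∈ K.faces ∧ s.card = m}) :
    K.boundary k m z τ = FullSimplex.boundary k (K.extendByZero k (m + 1) z) τ := by
  rw [FullSimplex.boundary_apply, SComplex.boundary, LinearMap.pi_apply, LinearMap.sum_apply,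
    ← Finset.sum_subset (Finset.subset_univ (τ : Finset V)ᶜ)]
  · refine Finset.sum_congr rfl fun v hv => ?_
    rw [Finset.mem_compl] at hv
    split_ifs with h
    · rw [LinearMap.smul_apply, LinearMap.proj_apply, smul_eq_mul,
        ← extendByZero_apply_val z ⟨insert v τ, _⟩]
      rfl
    · rw [LinearMap.zero_apply, extendByZero_apply_of_notMem z fun h' => h ⟨hv, h'.1⟩,
        mul_zero]
  · intro v _ hv
    rw [Finset.mem_compl, not_not] at hv
    rw [dif_neg fun h => h.1 hv, LinearMap.zero_apply]

theorem extendByZero_boundary (K : SComplex V) (m : ℕ) (z : K.chains k (m + 1)) :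
    K.extendByZero k m (K.boundary k m z) =
      FullSimplex.boundary k (K.extendByZero k (m + 1) z) := by
  funext s
  by_cases hs : s ∈ K.faces ∧ s.card = m
  · exact (extendByZero_apply_val _ ⟨s, hs⟩).trans (boundary_apply K m z ⟨s, hs⟩)
  · rw [extendByZero_apply_of_notMem _ hs]
    by_contra h
    exact hs ((mem_of_boundary_apply_ne_zero (extendByZero_mem_supportedChains z)
      (Ne.symm h)).imp_right Nat.add_right_cancel)

theorem mem_cycles_iff {K : SComplex V} {m : ℕ} {z : K.chains k m} :
    z ∈ K.cycles k m ↔ FullSimplex.boundary k (K.extendByZero k m z) = 0 := by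
  cases m with
  | zero =>
    exact iff_of_true Submodule.mem_top
      (boundary_eq_zero_of_mem_supportedChains_zero (extendByZero_mem_supportedChains z))
  | succ m =>
    rw [cycles, LinearMap.mem_ker, ← extendByZero_boundary,
      map_eq_zero_iff _ extendByZero_injective]

theorem cycles_le_range_boundary_iff {K : SComplex V} {m : ℕ} :
    K.cycles k m ≤ LinearMap.range (K.boundary k m) ↔ K.IsAcyclicAt k m := by
  constructor
  · intro h f hf hbf
    obtain ⟨z, rfl⟩ : f ∈ LinearMap.range (K.extendByZero k m) := by rwa [range_extendByZero]
    obtain ⟨y, rfl⟩ := h (mem_cycles_iff.2 hbf)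
    exact ⟨_, extendByZero_mem_supportedChains y, (extendByZero_boundary K m y).symm⟩
  · intro h z hz
    obtain ⟨g, hg, hbg⟩ := h _ (extendByZero_mem_supportedChains z) (mem_cycles_iff.1 hz)
    obtain ⟨y, rfl⟩ : g ∈ LinearMap.range (K.extendByZero k (m + 1)) := by rwa [range_extendByZero]
    exact ⟨y, extendByZero_injective (by rw [extendByZero_boundary, hbg])⟩

theorem nontrivial_redHomology_iff {K : SComplex V} {m : ℕ} :
    Nontrivial (K.redHomology k m) ↔ ¬K.IsAcyclicAt k m := by
  rw [← not_subsingleton_iff_nontrivial, ← cycles_le_range_boundary_iff]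
  exact not_congr (Submodule.Quotient.subsingleton_iff.trans Submodule.comap_subtype_eq_top)

theorem isAcyclicAt_of_card_lt (K : SComplex V) {m : ℕ} (hm : Fintype.card V < m) :
    K.IsAcyclicAt k m := by
  refine fun f hf _ => ⟨0, zero_mem _, (map_zero _).trans (funext fun s => ?_).symm⟩
  by_contra hs
  have := (hf s hs).2 ▸ Finset.card_le_univ s
  omega

theorem le_reg {K : SComplex V} {S : Set V} {j : ℕ} (h : ¬(K.restrict S).IsAcyclicAt k j) :
    j ≤ K.reg k :=
  le_csSup ⟨Fintype.card V, fun _ ⟨_, hT⟩ => not_lt.1 fun hi =>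
    nontrivial_redHomology_iff.1 hT (isAcyclicAt_of_card_lt _ hi)⟩
    ⟨S, nontrivial_redHomology_iff.2 h⟩

end

end SComplex

open SComplex in
/-- `reg_k(Δ) ≤ max{ reg_k(del_Δ(x)), reg_k(lk_Δ(x)) + 1 }` for any vertex `x`. -/
theorem stmt_17 {V : Type*} [LinearOrder V] [Fintype V] (k : Type*) [Field k]
    (Δ : SComplex V) (x : V) :
    Δ.reg k ≤ max ((Δ.deletion x).reg k) ((Δ.link x).reg k + 1) := by
  refine csSup_le' ?_
  rintro j ⟨S, hS⟩
  rw [nontrivial_redHomology_iff] at hS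
  by_cases hxS : x ∈ S
  · by_cases hdel : ((Δ.deletion x).restrict S).IsAcyclicAt k j
    · obtain ⟨i, rfl, hlk⟩ : ∃ i, j = i + 1 ∧ ¬((Δ.link x).restrict S).IsAcyclicAt k i := by
        by_contra! hlk
        rw [← restrict_deletion] at hdel
        simp_rw [← restrict_link Δ hxS] at hlk
        exact hS (isAcyclicAt_of_deletion_of_link hdel hlk)
      exact le_max_of_le_right (Nat.add_le_add_right (le_reg hlk) 1)
    · exact le_max_of_le_left (le_reg hdel)
  · rw [restrict_eq_deletion_restrict Δ hxS] at hS
    exact le_max_of_le_left (le_reg hS)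
end
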